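/- arXiv:1807.01038 — 7 statements merged into one kernel-verified Lean document; each statement's English description precedes it below -/
import Mathlib

section
/- Let H : ℝ^d → ℝ be a C² integrable Hamiltonian with ‖d²H(p)‖ ≤ C for all p, let R = (R^t)_{t≥0} be a variational operator for H, and let u₀ : ℝ^d → ℝ be Lipschitz and B-semiconcave for some B > 0. Then for all 0 ≤ t ≤ 1/(BC) and all q ∈ ℝ^d, R^t u₀(q) = inf{S : (t,q,S) ∈ 𝓕_{u₀}} = inf{u₀(q₀) + t(p₀·∇H(p₀) − H(p₀)) : q₀ ∈ ℝ^d, p₀ ∈ ∂u₀(q₀), q₀ + t∇H(p₀) = q}. -/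
open Filter Topology Set

noncomputable section

/-- `ℝ^d` with the euclidean structure. -/
abbrev Ed (d : ℕ) := EuclideanSpace ℝ (Fin d)

/-- The Clarke derivative of a Lipschitz function `u : ℝ^d → ℝ` at `q`. -/
def clarke {d : ℕ} (u : Ed d → ℝ) (q : Ed d) : Set (Ed d) :=
  convexHull ℝ {p | ∃ qn : ℕ → Ed d,
    (∀ n, DifferentiableAt ℝ u (qn n)) ∧
    Tendsto qn atTop (𝓝 q) ∧
    Tendsto (fun n => gradient u (qn n)) atTop (𝓝 p)}

/-- The generalized wavefront associated with a `C²` integrable Hamiltonian `H` and a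
Lipschitz initial condition `u₀`. -/
def wavefront {d : ℕ} (H u₀ : Ed d → ℝ) : Set (ℝ × Ed d × ℝ) :=
  {x | ∃ (t : ℝ) (q₀ p₀ : Ed d), 0 ≤ t ∧ p₀ ∈ clarke u₀ q₀ ∧
    x = (t, q₀ + t • gradient H p₀,
         u₀ q₀ + t * ((inner ℝ p₀ (gradient H p₀) : ℝ) - H p₀))}

/-- A variational operator for an integrable Hamiltonian `H`: a family of operators on
Lipschitz functions which is monotone, additive with respect to constants, and satisfies
the variational property (values given by the wavefront). -/
def IsVariationalOperator {d : ℕ} (H : Ed d → ℝ) (R : ℝ → (Ed d → ℝ) → Ed d → ℝ) : Prop :=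
  (∀ t : ℝ, 0 ≤ t → ∀ u : Ed d → ℝ, (∃ K, LipschitzWith K u) →
      ∃ K, LipschitzWith K (R t u)) ∧
  (∀ t : ℝ, 0 ≤ t → ∀ u v : Ed d → ℝ, (∃ K, LipschitzWith K u) →
      (∃ K, LipschitzWith K v) → (∀ q, u q ≤ v q) → ∀ q, R t u q ≤ R t v q) ∧
  (∀ t : ℝ, 0 ≤ t → ∀ u : Ed d → ℝ, (∃ K, LipschitzWith K u) → ∀ c : ℝ, ∀ q,
      R t (fun x => c + u x) q = c + R t u q) ∧
  (∀ t : ℝ, 0 ≤ t → ∀ u : Ed d → ℝ, (∃ K, LipschitzWith K u) → ∀ q : Ed d,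
      ∃ q₀ p₀ : Ed d, p₀ ∈ clarke u q₀ ∧ q = q₀ + t • gradient H p₀ ∧
        R t u q = u q₀ + t * ((inner ℝ p₀ (gradient H p₀) : ℝ) - H p₀))

/-! The variational property provides one point of the section of the wavefront, so only the
lower bound `R^t u₀(q) ≤ u₀(q₀) + t(p₀·∇H(p₀) − H(p₀))` for `q = q₀ + t∇H(p₀)`, `p₀ ∈ ∂u₀(q₀)`
needs an argument. Semiconcavity makes every Clarke gradient a quadratic superdifferential, so `u₀`
lies below the barrier `v(z) = u₀(q₀) + p₀·(z − q₀) + ψ(z − q₀)`, with `ψ` the Huber function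
(`B‖y‖²/2` near `0`, continued linearly so that `v` stays Lipschitz). By monotonicity
`R^t u₀(q) ≤ R^t v(q)`, and as `v` is `C¹` the variational property computes `R^t v(q)` along a
characteristic issued from `p = p₀ + ∇ψ(x − q₀)`. Since `ψ(y) = ∇ψ(y)·y − ‖∇ψ(y)‖²/(2B)` and
`H(p₀ + w) ≥ H(p₀) + ∇H(p₀)·w − C‖w‖²/2`, the condition `tC ≤ 1/B` bounds that value by
`u₀(q₀) + t(p₀·∇H(p₀) − H(p₀))`. -/

open InnerProductSpace RealInnerProductSpace

theorem ConcaveOn.le_add_of_hasFDerivAt {E : Type*} [NormedAddCommGroup E] [NormedSpace ℝ E]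
    {f : E → ℝ} (hf : ConcaveOn ℝ univ f) {L : E →L[ℝ] ℝ} {x : E} (hL : HasFDerivAt f L x)
    (y : E) : f y ≤ f x + L (y - x) := by
  have hline : ConcaveOn ℝ univ (f ∘ AffineMap.lineMap (k := ℝ) x y) := hf.comp_affineMap _
  have hderiv : HasDerivAt (f ∘ AffineMap.lineMap (k := ℝ) x y) (L (y - x)) 0 :=
    HasFDerivAt.comp_hasDerivAt (0 : ℝ) (by simpa using hL) AffineMap.hasDerivAt_lineMap
  have := hline.slope_le_of_hasDerivAt (mem_univ 0) (mem_univ 1) zero_lt_one hderiv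
  simp only [slope_def_field, Function.comp_apply, AffineMap.lineMap_apply_one,
    AffineMap.lineMap_apply_zero, sub_zero, div_one] at this
  linarith [map_sub L y x]

theorem le_image_add_of_norm_fderiv_sub_le {E : Type*} [NormedAddCommGroup E] [NormedSpace ℝ E]
    {f : E → ℝ} (hf : Differentiable ℝ f) {C : ℝ}
    (hC : ∀ a b, ‖fderiv ℝ f a - fderiv ℝ f b‖ ≤ C * ‖a - b‖) (x h : E) :
    f x + fderiv ℝ f x h - C / 2 * ‖h‖ ^ 2 ≤ f (x + h) := by
  set k : ℝ → ℝ := fun s => f (x + s • h) - s * fderiv ℝ f x h + C / 2 * s ^ 2 * ‖h‖ ^ 2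
  have hk : ∀ s, HasDerivAt k (fderiv ℝ f (x + s • h) h - fderiv ℝ f x h + C * s * ‖h‖ ^ 2) s := by
    intro s
    have hline : HasDerivAt (fun s : ℝ => x + s • h) h s := by
      simpa using ((hasDerivAt_id s).smul_const h).const_add x
    refine ((((hf _).hasFDerivAt.comp_hasDerivAt s hline).sub
      ((hasDerivAt_id s).mul_const (fderiv ℝ f x h))).add
      (((hasDerivAt_pow 2 s).const_mul (C / 2)).mul_const (‖h‖ ^ 2))).congr_deriv ?_
    simp only [Nat.add_one_sub_one, pow_one, Nat.cast_ofNat]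
    ring
  have hk' : ∀ s, 0 ≤ s → 0 ≤ fderiv ℝ f (x + s • h) h - fderiv ℝ f x h + C * s * ‖h‖ ^ 2 := by
    intro s hs
    have h1 := (fderiv ℝ f (x + s • h) - fderiv ℝ f x).le_opNorm h
    have h2 := hC (x + s • h) x
    rw [add_sub_cancel_left, norm_smul, Real.norm_of_nonneg hs] at h2
    rw [sub_apply, Real.norm_eq_abs] at h1
    nlinarith [neg_abs_le (fderiv ℝ f (x + s • h) h - fderiv ℝ f x h),
      mul_le_mul_of_nonneg_right h2 (norm_nonneg h)]
  have hmono : MonotoneOn k (Ici 0) :=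
    monotoneOn_of_hasDerivWithinAt_nonneg (convex_Ici 0)
      (HasDerivAt.continuousOn fun s _ => hk s) (fun s _ => (hk s).hasDerivWithinAt)
      (fun s hs => hk' s (interior_subset hs))
  have := hmono (mem_Ici.2 le_rfl) (mem_Ici.2 zero_le_one) zero_le_one
  simp only [k, zero_smul, add_zero, one_smul, zero_mul, sub_zero, one_mul, one_pow] at this
  linarith

theorem norm_fderiv_sub_le_of_norm_iteratedFDeriv_two_le {E F : Type*} [NormedAddCommGroup E]
    [NormedSpace ℝ E] [NormedAddCommGroup F] [NormedSpace ℝ F] {f : E → F} (hf : ContDiff ℝ 2 f)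
    {C : ℝ} (hC : ∀ x, ‖iteratedFDeriv ℝ 2 f x‖ ≤ C) (a b : E) :
    ‖fderiv ℝ f a - fderiv ℝ f b‖ ≤ C * ‖a - b‖ :=
  convex_univ.norm_image_sub_le_of_norm_fderiv_le
    (fun x _ => ((hf.fderiv_right le_rfl).differentiable one_ne_zero).differentiableAt)
    (fun x _ => by rw [← norm_iteratedFDeriv_one, norm_iteratedFDeriv_fderiv]; exact hC x)
    (mem_univ b) (mem_univ a)

section InnerProductSpace

variable {E : Type*} [NormedAddCommGroup E] [InnerProductSpace ℝ E] [CompleteSpace E]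

theorem lipschitzWith_of_hasGradientAt_of_norm_le {f : E → ℝ} {f' : E → E} {K : ℝ}
    (hf : ∀ x, HasGradientAt f (f' x) x) (hK : ∀ x, ‖f' x‖ ≤ K) : LipschitzWith K.toNNReal f :=
  lipschitzWith_of_nnnorm_fderiv_le (fun x => (hf x).differentiableAt) fun x => by
    rw [(hasGradientAt_iff_hasFDerivAt.1 (hf x)).fderiv, LinearIsometryEquiv.nnnorm_map,
      ← norm_toNNReal]
    exact Real.toNNReal_le_toNNReal (hK x)

theorem le_add_inner_add_sq_of_hasGradientAt {u : E → ℝ} {B : ℝ}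
    (hsc : ConcaveOn ℝ univ fun q => u q - B / 2 * ‖q‖ ^ 2) {x g : E} (hg : HasGradientAt u g x)
    (y : E) : u y ≤ u x + ⟪g, y - x⟫ + B / 2 * ‖y - x‖ ^ 2 := by
  have h := hsc.le_add_of_hasFDerivAt ((hasGradientAt_iff_hasFDerivAt.1 hg).sub
    ((hasStrictFDerivAt_norm_sq x).hasFDerivAt.const_mul (B / 2))) y
  simp only [sub_apply, smul_apply, toDual_apply_apply, innerSL_apply_apply,
    smul_eq_mul, nsmul_eq_mul] at h
  have hsq : ‖y‖ ^ 2 = ‖x‖ ^ 2 + 2 * ⟪x, y - x⟫ + ‖y - x‖ ^ 2 := by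
    rw [← norm_add_sq_real, add_sub_cancel]
  linear_combination h + B / 2 * hsq

theorem le_image_add_of_norm_iteratedFDeriv_two_le {f : E → ℝ} (hf : ContDiff ℝ 2 f) {C : ℝ}
    (hC : ∀ x, ‖iteratedFDeriv ℝ 2 f x‖ ≤ C) (x h : E) :
    f x + ⟪gradient f x, h⟫ - C / 2 * ‖h‖ ^ 2 ≤ f (x + h) := by
  simpa only [inner_gradient_left] using le_image_add_of_norm_fderiv_sub_le
    (hf.differentiable two_ne_zero) (norm_fderiv_sub_le_of_norm_iteratedFDeriv_two_le hf hC) x h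

end InnerProductSpace

section Huber

def huberProfile (r a : ℝ) : ℝ := if a ≤ r ^ 2 then a / 2 else r * √a - r ^ 2 / 2

theorem huberProfile_of_sq_le {r a : ℝ} (hr : 0 ≤ r) (ha : r ^ 2 ≤ a) :
    huberProfile r a = r * √a - r ^ 2 / 2 := by
  rcases ha.eq_or_lt with rfl | ha
  · simp only [huberProfile, le_refl, if_true, Real.sqrt_sq hr]
    ring
  · simp [huberProfile, not_le.2 ha]

theorem hasDerivAt_huberProfile {r : ℝ} (hr : 0 < r) (a : ℝ) :
    HasDerivAt (huberProfile r) (r / (2 * max √a r)) a := by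
  have hquad : ∀ a ≤ r ^ 2,
      HasDerivWithinAt (huberProfile r) (r / (2 * max √a r)) (Iic (r ^ 2)) a := by
    intro a ha
    rw [max_eq_right ((Real.sqrt_le_left hr.le).2 ha), show r / (2 * r) = 1 / 2 by field_simp]
    refine ((hasDerivAt_id a).div_const 2).hasDerivWithinAt.congr (fun b hb => ?_) ?_
    · simp [huberProfile, mem_Iic.1 hb]
    · simp [huberProfile, ha]
  have haff : ∀ a, r ^ 2 ≤ a →
      HasDerivWithinAt (huberProfile r) (r / (2 * max √a r)) (Ici (r ^ 2)) a := by
    intro a ha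
    have ha0 : a ≠ 0 := (lt_of_lt_of_le (by positivity) ha).ne'
    rw [max_eq_left (Real.le_sqrt_of_sq_le ha), show r / (2 * √a) = r * (1 / (2 * √a)) by ring]
    exact (((Real.hasDerivAt_sqrt ha0).const_mul r).sub_const (r ^ 2 / 2)).hasDerivWithinAt.congr
      (fun b hb => huberProfile_of_sq_le hr.le hb) (huberProfile_of_sq_le hr.le ha)
  rcases lt_trichotomy a (r ^ 2) with ha | rfl | ha
  · exact (hquad a ha.le).hasDerivAt (Iic_mem_nhds ha)
  · simpa [Iic_union_Ici] using (hquad _ le_rfl).union (haff _ le_rfl)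
  · exact (haff a ha.le).hasDerivAt (Ici_mem_nhds ha)

variable {E : Type*} [NormedAddCommGroup E]

/-- `B ‖y‖² / 2` for `‖y‖ ≤ r` and `B (r ‖y‖ - r² / 2)` beyond; it is written through `‖y‖²` so
that its differentiability reduces to that of the one-variable `huberProfile`. -/
def huber (B r : ℝ) (y : E) : ℝ := B * huberProfile r (‖y‖ ^ 2)

theorem huber_of_norm_le {B r : ℝ} {y : E} (hy : ‖y‖ ≤ r) : huber B r y = B / 2 * ‖y‖ ^ 2 := by
  rw [huber, huberProfile, if_pos (pow_le_pow_left₀ (norm_nonneg y) hy 2)]; ring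

theorem huber_of_le_norm {B r : ℝ} (hr : 0 ≤ r) {y : E} (hy : r ≤ ‖y‖) :
    huber B r y = B * (r * ‖y‖ - r ^ 2 / 2) := by
  rw [huber, huberProfile_of_sq_le hr (pow_le_pow_left₀ hr hy 2), Real.sqrt_sq (norm_nonneg y)]

theorem le_huber {B r L a : ℝ} (hB : 0 ≤ B) (hr : 0 < r) (hBr : 2 * L ≤ B * r) {y : E}
    (hquad : a ≤ B / 2 * ‖y‖ ^ 2) (hlin : a ≤ L * ‖y‖) : a ≤ huber B r y := by
  rcases le_total ‖y‖ r with hy | hy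
  · rwa [huber_of_norm_le hy]
  · rw [huber_of_le_norm hr.le hy]
    have h1 := mul_nonneg (mul_nonneg hB hr.le) (sub_nonneg.2 hy)
    have h2 := mul_nonneg (sub_nonneg.2 hBr) (norm_nonneg y)
    linarith

variable [InnerProductSpace ℝ E]

def huberGrad (B r : ℝ) (y : E) : E := (B * r / max ‖y‖ r) • y

theorem continuous_huberGrad {B r : ℝ} (hr : 0 < r) : Continuous (huberGrad (E := E) B r) :=
  (continuous_const.div (continuous_norm.max continuous_const)
    fun _ => (lt_max_of_lt_right hr).ne').smul continuous_id

theorem norm_huberGrad_le {B r : ℝ} (hB : 0 ≤ B) (hr : 0 < r) (y : E) :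
    ‖huberGrad B r y‖ ≤ B * r := by
  have hmax : 0 < max ‖y‖ r := lt_max_of_lt_right hr
  rw [huberGrad, norm_smul, Real.norm_of_nonneg (by positivity), div_mul_eq_mul_div,
    div_le_iff₀ hmax]
  exact mul_le_mul_of_nonneg_left (le_max_left _ _) (by positivity)

theorem huber_eq_inner_huberGrad_sub {B r : ℝ} (hB : B ≠ 0) (hr : 0 < r) (y : E) :
    huber B r y = ⟪huberGrad B r y, y⟫ - ‖huberGrad B r y‖ ^ 2 / (2 * B) := by
  rw [huberGrad, real_inner_smul_left, real_inner_self_eq_norm_sq, norm_smul, Real.norm_eq_abs,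
    mul_pow, sq_abs]
  rcases le_total ‖y‖ r with hy | hy
  · rw [huber_of_norm_le hy, max_eq_right hy]
    field_simp
    ring
  · have hy0 : ‖y‖ ≠ 0 := (hr.trans_le hy).ne'
    rw [huber_of_le_norm hr.le hy, max_eq_left hy]
    field_simp

theorem hasGradientAt_huber [CompleteSpace E] {B r : ℝ} (hr : 0 < r) (y : E) :
    HasGradientAt (huber B r) (huberGrad B r y) y := by
  have h : HasFDerivAt (huber B r) (B • (r / (2 * max ‖y‖ r)) • 2 • innerSL ℝ y) y := by
    have h := ((hasDerivAt_huberProfile hr (‖y‖ ^ 2)).comp_hasFDerivAt y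
        (hasStrictFDerivAt_norm_sq y).hasFDerivAt).const_mul B
    rw [Real.sqrt_sq (norm_nonneg y)] at h
    exact h
  rw [hasGradientAt_iff_hasFDerivAt]
  refine h.congr_fderiv (ContinuousLinearMap.ext fun z => ?_)
  simp only [huberGrad, toDual_apply_apply, real_inner_smul_left,
    smul_apply, innerSL_apply_apply, smul_eq_mul, nsmul_eq_mul]
  have hmax : max ‖y‖ r ≠ 0 := (lt_max_of_lt_right hr).ne'
  field_simp
  ring

theorem hasGradientAt_add_inner_add_huber [CompleteSpace E] {B r : ℝ} (hr : 0 < r) (c : ℝ)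
    (q₀ p₀ x : E) :
    HasGradientAt (fun z => c + ⟪p₀, z - q₀⟫ + huber B r (z - q₀))
      (p₀ + huberGrad B r (x - q₀)) x := by
  have hshift : HasFDerivAt (fun z : E => z - q₀) (ContinuousLinearMap.id ℝ E) x :=
    (hasFDerivAt_id x).sub_const q₀
  have hhuber :=
    (hasGradientAt_iff_hasFDerivAt.1 (hasGradientAt_huber (B := B) hr (x - q₀))).comp x hshift
  have hinner := (innerSL ℝ p₀).hasFDerivAt.comp x hshift
  rw [hasGradientAt_iff_hasFDerivAt]
  refine ((hinner.const_add c).add hhuber).congr_fderiv (ContinuousLinearMap.ext fun z => ?_)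
  simp

theorem inner_add_huber_add_action_le [CompleteSpace E] {H : E → ℝ} {B C r t : ℝ}
    (hH : ∀ p w, H p + ⟪gradient H p, w⟫ - C / 2 * ‖w‖ ^ 2 ≤ H (p + w)) (hB : 0 < B)
    (hr : 0 < r) (ht : 0 ≤ t) (htC : t * C ≤ 1 / B) {p₀ y : E}
    (hy : t • gradient H (p₀ + huberGrad B r y) = t • gradient H p₀ - y) :
    ⟪p₀, y⟫ + huber B r y + t * (⟪p₀ + huberGrad B r y, gradient H (p₀ + huberGrad B r y)⟫
      - H (p₀ + huberGrad B r y)) ≤ t * (⟪p₀, gradient H p₀⟫ - H p₀) := by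
  have hfenchel := huber_eq_inner_huberGrad_sub hB.ne' hr y
  set w := huberGrad B r y
  have hdiv : ‖w‖ ^ 2 / (2 * B) = 1 / B * (‖w‖ ^ 2 / 2) := by field_simp
  have htaylor := mul_le_mul_of_nonneg_left (hH p₀ w) ht
  have hnorm := mul_le_mul_of_nonneg_right htC (by positivity : 0 ≤ ‖w‖ ^ 2 / 2)
  have hinner : t * ⟪p₀ + w, gradient H (p₀ + w)⟫ =
      t * ⟪p₀, gradient H p₀⟫ + t * ⟪gradient H p₀, w⟫ - ⟪p₀, y⟫ - ⟪w, y⟫ := by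
    rw [← real_inner_smul_right, hy, inner_sub_right, inner_add_left, inner_add_left,
      real_inner_smul_right, real_inner_smul_right, real_inner_comm w]
    ring
  rw [hfenchel, hdiv]
  linear_combination hinner + htaylor + hnorm

end Huber

section Clarke

variable {d : ℕ}

theorem clarke_eq_singleton {u : Ed d → ℝ} {g : Ed d → Ed d} (hu : ∀ x, HasGradientAt u (g x) x)
    (hg : Continuous g) (q : Ed d) : clarke u q = {g q} := by
  rw [clarke, ← convexHull_singleton (𝕜 := ℝ) (g q), gradient_eq hu]
  congr 1
  ext p
  constructor
  · rintro ⟨qn, -, hqn, hgrad⟩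
    exact tendsto_nhds_unique hgrad ((hg.tendsto q).comp hqn)
  · rintro rfl
    exact ⟨fun _ => q, fun _ => (hu q).differentiableAt, tendsto_const_nhds, tendsto_const_nhds⟩

theorem le_add_inner_add_sq_of_mem_clarke {u : Ed d → ℝ} (hu : Continuous u) {B : ℝ}
    (hsc : ConcaveOn ℝ univ fun q => u q - B / 2 * ‖q‖ ^ 2) {q p : Ed d} (hp : p ∈ clarke u q)
    (y : Ed d) : u y ≤ u q + ⟪p, y - q⟫ + B / 2 * ‖y - q‖ ^ 2 := by
  suffices h : clarke u q ⊆ {p | ∀ y, u y ≤ u q + ⟪p, y - q⟫ + B / 2 * ‖y - q‖ ^ 2} from h hp y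
  refine convexHull_min ?_ ?_
  · rintro p ⟨qn, hdiff, hqn, hgrad⟩ y
    have hyqn : Tendsto (fun n => y - qn n) atTop (𝓝 (y - q)) := tendsto_const_nhds.sub hqn
    exact le_of_tendsto_of_tendsto' tendsto_const_nhds
      ((((hu.tendsto q).comp hqn).add (hgrad.inner hyqn)).add ((hyqn.norm.pow 2).const_mul _))
      fun n => le_add_inner_add_sq_of_hasGradientAt hsc (hdiff n).hasGradientAt y
  · intro p₁ h₁ p₂ h₂ a b ha hb hab y
    have := add_le_add (mul_le_mul_of_nonneg_left (h₁ y) ha) (mul_le_mul_of_nonneg_left (h₂ y) hb)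
    rw [inner_add_left, real_inner_smul_left, real_inner_smul_left]
    linear_combination this - (u y - u q - B / 2 * ‖y - q‖ ^ 2) * hab

theorem le_add_inner_add_huber_of_mem_clarke {u : Ed d → ℝ} {K : NNReal} (hu : LipschitzWith K u)
    {B r : ℝ} (hB : 0 ≤ B) (hsc : ConcaveOn ℝ univ fun q => u q - B / 2 * ‖q‖ ^ 2) (hr : 0 < r)
    {q p : Ed d} (hBr : 2 * (K + ‖p‖) ≤ B * r) (hp : p ∈ clarke u q) (z : Ed d) :
    u z ≤ u q + ⟪p, z - q⟫ + huber B r (z - q) := by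
  have hquad := le_add_inner_add_sq_of_mem_clarke hu.continuous hsc hp z
  have hlip : u z - u q ≤ K * ‖z - q‖ := by
    simpa [Real.dist_eq, dist_eq_norm] using (le_abs_self _).trans (hu.dist_le_mul z q)
  have hinner := (abs_le.1 (abs_real_inner_le_norm p (z - q))).1
  have := le_huber (a := u z - u q - ⟪p, z - q⟫) (y := z - q) hB hr hBr (by linarith) (by linarith)
  linarith

theorem wavefront_section_eq {H u₀ : Ed d → ℝ} {t : ℝ} (ht : 0 ≤ t) (q : Ed d) :
    {S | (t, q, S) ∈ wavefront H u₀} = {S | ∃ q₀ p₀ : Ed d, p₀ ∈ clarke u₀ q₀ ∧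
      q₀ + t • gradient H p₀ = q ∧ S = u₀ q₀ + t * (⟪p₀, gradient H p₀⟫ - H p₀)} := by
  ext S
  simp only [wavefront, mem_ofPred_eq, Prod.mk.injEq]
  constructor
  · rintro ⟨_, q₀, p₀, -, hp₀, rfl, hq, hS⟩
    exact ⟨q₀, p₀, hp₀, hq.symm, hS⟩
  · rintro ⟨q₀, p₀, hp₀, hq, hS⟩
    exact ⟨t, q₀, p₀, ht, hp₀, rfl, hq.symm, hS⟩

theorem IsVariationalOperator.apply_le_of_mem_clarke {H : Ed d → ℝ}
    {R : ℝ → (Ed d → ℝ) → Ed d → ℝ} (hR : IsVariationalOperator H R) {C : ℝ}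
    (hH : ∀ p w, H p + ⟪gradient H p, w⟫ - C / 2 * ‖w‖ ^ 2 ≤ H (p + w)) {u₀ : Ed d → ℝ}
    {K : NNReal} (hK : LipschitzWith K u₀) {B : ℝ} (hB : 0 < B)
    (hsc : ConcaveOn ℝ univ fun q => u₀ q - B / 2 * ‖q‖ ^ 2) {t : ℝ} (ht : 0 ≤ t)
    (htC : t * C ≤ 1 / B) {q₀ p₀ : Ed d} (hp₀ : p₀ ∈ clarke u₀ q₀) :
    R t u₀ (q₀ + t • gradient H p₀) ≤ u₀ q₀ + t * (⟪p₀, gradient H p₀⟫ - H p₀) := by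
  obtain ⟨r, hr, hBr⟩ : ∃ r, 0 < r ∧ 2 * (K + ‖p₀‖) ≤ B * r :=
    ⟨2 * (K + ‖p₀‖) / B + 1, by positivity, by rw [mul_add B, mul_div_cancel₀ _ hB.ne']; linarith⟩
  set v : Ed d → ℝ := fun z => u₀ q₀ + ⟪p₀, z - q₀⟫ + huber B r (z - q₀)
  have hv := hasGradientAt_add_inner_add_huber (B := B) hr (u₀ q₀) q₀ p₀
  have hvLip : LipschitzWith (‖p₀‖ + B * r).toNNReal v :=
    lipschitzWith_of_hasGradientAt_of_norm_le hv fun x =>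
      (norm_add_le _ _).trans (add_le_add le_rfl (norm_huberGrad_le hB.le hr _))
  obtain ⟨x, p, hp, hq, hRv⟩ := hR.2.2.2 t ht v ⟨_, hvLip⟩ (q₀ + t • gradient H p₀)
  rw [clarke_eq_singleton hv (continuous_const.add ((continuous_huberGrad hr).comp
    (continuous_sub_right q₀))), mem_singleton_iff] at hp
  calc R t u₀ (q₀ + t • gradient H p₀) ≤ R t v (q₀ + t • gradient H p₀) :=
        hR.2.1 t ht u₀ v ⟨K, hK⟩ ⟨_, hvLip⟩
          (le_add_inner_add_huber_of_mem_clarke hK hB.le hsc hr hBr hp₀) _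
    _ = v x + t * (⟪p, gradient H p⟫ - H p) := hRv
    _ ≤ u₀ q₀ + t * (⟪p₀, gradient H p₀⟫ - H p₀) := by
      subst hp
      have := inner_add_huber_add_action_le hH hB hr ht htC (p₀ := p₀) (y := x - q₀)
        (by linear_combination (norm := module) -hq)
      simp only [v]
      linarith

/-- For a variational operator `R` and a Lipschitz `B`-semiconcave initial
condition `u₀`, for `0 ≤ t ≤ 1/(BC)` the value `R^t u₀(q)` is the minimal section of the
wavefront. -/
theorem statement3 (d : ℕ) (H : Ed d → ℝ) (C : ℝ)
    (hH : ContDiff ℝ 2 H) (hC : ∀ p, ‖iteratedFDeriv ℝ 2 H p‖ ≤ C)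
    (R : ℝ → (Ed d → ℝ) → Ed d → ℝ) (hR : IsVariationalOperator H R)
    (u₀ : Ed d → ℝ) (hLip : ∃ K, LipschitzWith K u₀) (B : ℝ) (hB : 0 < B)
    (hsc : ConcaveOn ℝ Set.univ (fun q => u₀ q - B / 2 * ‖q‖ ^ 2)) :
    ∀ t : ℝ, 0 ≤ t → t ≤ 1 / (B * C) → ∀ q : Ed d,
      R t u₀ q = sInf {S | (t, q, S) ∈ wavefront H u₀} ∧
      R t u₀ q = sInf {S | ∃ q₀ p₀ : Ed d, p₀ ∈ clarke u₀ q₀ ∧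
        q₀ + t • gradient H p₀ = q ∧
        S = u₀ q₀ + t * ((inner ℝ p₀ (gradient H p₀) : ℝ) - H p₀)} := by
  intro t ht htBC q
  obtain ⟨K, hK⟩ := hLip
  have hC0 : 0 ≤ C := (norm_nonneg _).trans (hC 0)
  have htC : t * C ≤ 1 / B := by
    rcases hC0.eq_or_lt with rfl | hCpos
    · simpa using hB.le
    · calc t * C ≤ 1 / (B * C) * C := mul_le_mul_of_nonneg_right htBC hC0
        _ = 1 / B := by field_simp
  have hleast : IsLeast {S | ∃ q₀ p₀ : Ed d, p₀ ∈ clarke u₀ q₀ ∧ q₀ + t • gradient H p₀ = q ∧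
      S = u₀ q₀ + t * (⟪p₀, gradient H p₀⟫ - H p₀)} (R t u₀ q) := by
    refine ⟨?_, ?_⟩
    · obtain ⟨q₀, p₀, hp₀, hq, hRq⟩ := hR.2.2.2 t ht u₀ ⟨K, hK⟩ q
      exact ⟨q₀, p₀, hp₀, hq.symm, hRq⟩
    · rintro S ⟨q₀, p₀, hp₀, rfl, rfl⟩
      exact hR.apply_le_of_mem_clarke (le_image_add_of_norm_iteratedFDeriv_two_le hH hC) hK hB hsc
        ht htC hp₀
  rw [wavefront_section_eq ht]
  exact ⟨hleast.csInf_eq.symm, hleast.csInf_eq.symm⟩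
end Clarke
end
end

section
/- Let H : ℝ → ℝ be C² with |H''| ≤ C, let u₀ : ℝ → ℝ be C² with |u₀''| ≤ B, and let 0 < t < 1/(BC). Define x_t(q) = q + tH'(u₀'(q)) and y_t(q) = u₀(q) + t·u₀'(q)H'(u₀'(q)) − tH(u₀'(q)). Then: (1) for every q, x_t'(q) = 1 + t·u₀''(q)H''(u₀'(q)) > 0 and y_t'(q) = u₀'(q)·x_t'(q), so the curve q ↦ (x_t(q), y_t(q)) is the graph of a C¹ function whose slope at the point x_t(q) equals u₀'(q); (2) if u₀ is convex (respectively concave) on an interval I, then the function y_t ∘ x_t⁻¹ is convex (respectively concave) on x_t(I); (3) for the curve z(p) = tH'(p), w(p) = t(pH'(p) − H(p)), one has w'(p) = p·z'(p) for every p, so at any p with H''(p) ≠ 0 its slope equals p. -/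
open Filter Topology Set Function

/-!
Along the smooth piece, `y_t' = u₀' · x_t'` and `x_t' = 1 + t u₀'' H''(u₀') ≥ 1 - tBC > 0`.
So `x_t` is a diffeomorphism of `ℝ` (its derivative is bounded below), and `ψ = y_t ∘ x_t⁻¹`
has derivative `u₀' ∘ x_t⁻¹` by the chain rule and the inverse function rule. Since `x_t⁻¹`
is increasing, `ψ'` is monotone (antitone) on `x_t(I)` whenever `u₀'` is on `I`, which is
convexity (concavity) of `ψ`. For the singular piece, `w' = t p H''(p) = p z'`.
-/

section OrderedField

variable {𝕜 : Type*} [Field 𝕜] [LinearOrder 𝕜] [IsStrictOrderedRing 𝕜]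

lemma mul_lt_one_of_lt_one_div {t a : 𝕜} (ht : 0 ≤ t) (h : t < 1 / a) : t * a < 1 := by
  rcases le_or_gt a 0 with ha | ha
  · exact (mul_nonpos_of_nonneg_of_nonpos ht ha).trans_lt one_pos
  · exact (lt_div_iff₀ ha).mp h

lemma one_sub_mul_le_one_add_mul {t a b B C : 𝕜} (ht : 0 ≤ t) (ha : |a| ≤ B) (hb : |b| ≤ C) :
    1 - t * (B * C) ≤ 1 + t * a * b := by
  have hab : |a * b| ≤ B * C :=
    abs_mul a b ▸ mul_le_mul ha hb (abs_nonneg _) ((abs_nonneg _).trans ha)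
  have := mul_le_mul_of_nonneg_left (neg_le_of_abs_le hab) ht
  linarith [mul_assoc t a b]

end OrderedField

lemma surjective_of_hasDerivAt_of_le {f f' : ℝ → ℝ} {ε : ℝ} (hf : ∀ x, HasDerivAt f (f' x) x)
    (hε : 0 < ε) (h : ∀ x, ε ≤ f' x) : Surjective f := by
  have hmono : Monotone fun x => f x - ε * x :=
    monotone_of_hasDerivAt_nonneg (fun x => (hf x).sub ((hasDerivAt_id' x).const_mul ε))
      fun x => by simpa using h x
  have hlin : Tendsto (fun x => f 0 + ε * x) atTop atTop ∧
      Tendsto (fun x => f 0 + ε * x) atBot atBot :=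
    ⟨tendsto_atTop_add_const_left _ _ ((tendsto_const_mul_atTop_of_pos hε).mpr tendsto_id),
      tendsto_atBot_add_const_left _ _ ((tendsto_const_mul_atBot_of_pos hε).mpr tendsto_id)⟩
  have hcont : Continuous f := continuous_iff_continuousAt.mpr fun x => (hf x).continuousAt
  refine hcont.surjective (tendsto_atTop_mono' _ ?_ hlin.1) (tendsto_atBot_mono' _ ?_ hlin.2)
  · filter_upwards [eventually_ge_atTop 0] with x hx
    linarith [hmono hx]
  · filter_upwards [eventually_le_atBot 0] with x hx
    linarith [hmono hx]

lemma StrictMono.monotone_invFun {x : ℝ → ℝ} (hx : StrictMono x) (hsurj : Surjective x) :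
    Monotone (invFun x) := fun a b hab => by
  rwa [← hx.le_iff_le, rightInverse_invFun hsurj a, rightInverse_invFun hsurj b]

lemma StrictMono.continuous_invFun {x : ℝ → ℝ} (hx : StrictMono x) (hsurj : Surjective x) :
    Continuous (invFun x) :=
  (hx.monotone_invFun hsurj).continuous_of_surjective (invFun_surjective hx.injective)

lemma MonotoneOn.comp_invFun_image {x s : ℝ → ℝ} {I : Set ℝ} (hs : MonotoneOn s I)
    (hx : StrictMono x) : MonotoneOn (s ∘ invFun x) (x '' I) := by
  rintro _ ⟨a, ha, rfl⟩ _ ⟨b, hb, rfl⟩ hab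
  simp only [comp_apply, leftInverse_invFun hx.injective _]
  exact hs ha hb (hx.le_iff_le.mp hab)

section GraphOfCurve

variable {x x' y s : ℝ → ℝ}

lemma hasDerivAt_comp_invFun (hsurj : Surjective x) (hdx : ∀ q, HasDerivAt x (x' q) q)
    (hx' : ∀ q, 0 < x' q) (hdy : ∀ q, HasDerivAt y (s q * x' q) q) (q : ℝ) :
    HasDerivAt (y ∘ invFun x) (s q) (x q) := by
  have hx := strictMono_of_hasDerivAt_pos hdx hx'
  have hinv : invFun x (x q) = q := leftInverse_invFun hx.injective q
  have hdinv : HasDerivAt (invFun x) (x' q)⁻¹ (x q) :=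
    .of_local_left_inverse (hx.continuous_invFun hsurj).continuousAt (by rw [hinv]; exact hdx q)
      (hx' q).ne' (.of_forall (rightInverse_invFun hsurj))
  have hcomp := HasDerivAt.comp (x q) (by rw [hinv]; exact hdy q) hdinv
  rwa [mul_assoc, mul_inv_cancel₀ (hx' q).ne', mul_one] at hcomp

lemma differentiable_comp_invFun (hsurj : Surjective x) (hdx : ∀ q, HasDerivAt x (x' q) q)
    (hx' : ∀ q, 0 < x' q) (hdy : ∀ q, HasDerivAt y (s q * x' q) q) :
    Differentiable ℝ (y ∘ invFun x) := fun z => by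
  obtain ⟨q, rfl⟩ := hsurj z
  exact (hasDerivAt_comp_invFun hsurj hdx hx' hdy q).differentiableAt

lemma deriv_comp_invFun (hsurj : Surjective x) (hdx : ∀ q, HasDerivAt x (x' q) q)
    (hx' : ∀ q, 0 < x' q) (hdy : ∀ q, HasDerivAt y (s q * x' q) q) :
    deriv (y ∘ invFun x) = s ∘ invFun x := funext fun z => by
  obtain ⟨q, rfl⟩ := hsurj z
  rw [(hasDerivAt_comp_invFun hsurj hdx hx' hdy q).deriv, comp_apply,
    leftInverse_invFun (strictMono_of_hasDerivAt_pos hdx hx').injective q]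

lemma contDiff_one_comp_invFun (hsurj : Surjective x) (hdx : ∀ q, HasDerivAt x (x' q) q)
    (hx' : ∀ q, 0 < x' q) (hdy : ∀ q, HasDerivAt y (s q * x' q) q) (hs : Continuous s) :
    ContDiff ℝ 1 (y ∘ invFun x) := by
  refine contDiff_one_iff_deriv.mpr ⟨differentiable_comp_invFun hsurj hdx hx' hdy, ?_⟩
  rw [deriv_comp_invFun hsurj hdx hx' hdy]
  exact hs.comp ((strictMono_of_hasDerivAt_pos hdx hx').continuous_invFun hsurj)

lemma convexOn_image_comp_invFun (hsurj : Surjective x) (hdx : ∀ q, HasDerivAt x (x' q) q)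
    (hx' : ∀ q, 0 < x' q) (hdy : ∀ q, HasDerivAt y (s q * x' q) q) {I : Set ℝ}
    (hI : Convex ℝ I) (hs : MonotoneOn s I) : ConvexOn ℝ (x '' I) (y ∘ invFun x) := by
  have hx := strictMono_of_hasDerivAt_pos hdx hx'
  have hxI : Convex ℝ (x '' I) :=
    (hI.isPreconnected.image x fun q _ => (hdx q).continuousAt.continuousWithinAt).convex
  have hψ := differentiable_comp_invFun hsurj hdx hx' hdy
  refine MonotoneOn.convexOn_of_deriv hxI hψ.continuous.continuousOn hψ.differentiableOn ?_
  rw [deriv_comp_invFun hsurj hdx hx' hdy]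
  exact (hs.comp_invFun_image hx).mono interior_subset

lemma concaveOn_image_comp_invFun (hsurj : Surjective x) (hdx : ∀ q, HasDerivAt x (x' q) q)
    (hx' : ∀ q, 0 < x' q) (hdy : ∀ q, HasDerivAt y (s q * x' q) q) {I : Set ℝ}
    (hI : Convex ℝ I) (hs : AntitoneOn s I) : ConcaveOn ℝ (x '' I) (y ∘ invFun x) :=
  neg_convexOn_iff.mp <| convexOn_image_comp_invFun (y := -y) (s := -s) hsurj hdx hx'
    (fun q => by simpa only [Pi.neg_apply, neg_mul] using (hdy q).neg) hI hs.neg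

end GraphOfCurve

section Wavefront

variable {H u₀ : ℝ → ℝ} (t : ℝ)

lemma hasDerivAt_wavefront_x (hH : ContDiff ℝ 2 H) (hu : ContDiff ℝ 2 u₀) (q : ℝ) :
    HasDerivAt (fun q => q + t * deriv H (deriv u₀ q))
      (1 + t * deriv (deriv u₀) q * deriv (deriv H) (deriv u₀ q)) q := by
  have hcomp := (hH.differentiable_deriv_two _).hasDerivAt.comp q
    (hu.differentiable_deriv_two q).hasDerivAt
  exact ((hasDerivAt_id q).add (hcomp.const_mul t)).congr_deriv (by ring)

lemma hasDerivAt_wavefront_y (hH : ContDiff ℝ 2 H) (hu : ContDiff ℝ 2 u₀) (q : ℝ) :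
    HasDerivAt (fun q => u₀ q + t * deriv u₀ q * deriv H (deriv u₀ q) - t * H (deriv u₀ q))
      (deriv u₀ q * (1 + t * deriv (deriv u₀) q * deriv (deriv H) (deriv u₀ q))) q := by
  have hu' := (hu.differentiable_deriv_two q).hasDerivAt
  have hH' := (hH.differentiable_deriv_two _).hasDerivAt.comp q hu'
  have hH₀ := (hH.differentiable two_ne_zero _).hasDerivAt.comp q hu'
  have hu₀ := (hu.differentiable two_ne_zero q).hasDerivAt
  exact ((hu₀.add ((hu'.const_mul t).mul hH')).sub (hH₀.const_mul t)).congr_deriv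
    (by simp only [comp_apply]; ring)

lemma hasDerivAt_wavefront_z (hH : ContDiff ℝ 2 H) (p : ℝ) :
    HasDerivAt (fun p => t * deriv H p) (t * deriv (deriv H) p) p :=
  (hH.differentiable_deriv_two p).hasDerivAt.const_mul t

lemma hasDerivAt_wavefront_w (hH : ContDiff ℝ 2 H) (p : ℝ) :
    HasDerivAt (fun p => t * (p * deriv H p - H p)) (p * (t * deriv (deriv H) p)) p := by
  have hH' := (hH.differentiable_deriv_two p).hasDerivAt
  have hH₀ := (hH.differentiable two_ne_zero p).hasDerivAt
  exact ((((hasDerivAt_id' p).mul hH').sub hH₀).const_mul t).congr_deriv (by ring)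

end Wavefront

/-- Slopes and convexity of the parametrized pieces of the wavefront in
dimension one: `(x_t, y_t)` parametrizes the piece issued from the smooth part of the
initial condition and `(z, w)` the piece issued from a singularity. -/
theorem statement8 (H u₀ : ℝ → ℝ) (C B t : ℝ)
    (hH : ContDiff ℝ 2 H) (hC : ∀ p, |deriv (deriv H) p| ≤ C)
    (hu : ContDiff ℝ 2 u₀) (hB : ∀ q, |deriv (deriv u₀) q| ≤ B)
    (ht : 0 < t) (ht' : t < 1 / (B * C))
    (xt yt z w : ℝ → ℝ)
    (hxt : xt = fun q => q + t * deriv H (deriv u₀ q))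
    (hyt : yt = fun q => u₀ q + t * deriv u₀ q * deriv H (deriv u₀ q) - t * H (deriv u₀ q))
    (hz : z = fun p => t * deriv H p)
    (hw : w = fun p => t * (p * deriv H p - H p)) :
    -- (1) slopes on the piece issued from the smooth part
    (∀ q : ℝ,
      deriv xt q = 1 + t * deriv (deriv u₀) q * deriv (deriv H) (deriv u₀ q) ∧
      0 < deriv xt q ∧
      deriv yt q = deriv u₀ q * deriv xt q) ∧
    -- the curve `(x_t, y_t)` is the graph of a `C¹` function with slope `u₀'(q)` at `x_t(q)`
    (∃ ψ : ℝ → ℝ, ContDiff ℝ 1 ψ ∧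
      ∀ q : ℝ, ψ (xt q) = yt q ∧ deriv ψ (xt q) = deriv u₀ q) ∧
    -- (2) convexity of the piece issued from an interval where `u₀` is convex (resp. concave)
    (∀ I : Set ℝ,
      (ConvexOn ℝ I u₀ → ConvexOn ℝ (xt '' I) (yt ∘ Function.invFun xt)) ∧
      (ConcaveOn ℝ I u₀ → ConcaveOn ℝ (xt '' I) (yt ∘ Function.invFun xt))) ∧
    -- (3) slopes on the piece issued from a singularity
    (∀ p : ℝ, deriv w p = p * deriv z p) ∧
    (∀ p : ℝ, deriv (deriv H) p ≠ 0 → deriv w p / deriv z p = p) := by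
  set x' := fun q => 1 + t * deriv (deriv u₀) q * deriv (deriv H) (deriv u₀ q)
  have hdx : ∀ q, HasDerivAt xt (x' q) q := hxt ▸ hasDerivAt_wavefront_x t hH hu
  have hdy : ∀ q, HasDerivAt yt (deriv u₀ q * x' q) q := hyt ▸ hasDerivAt_wavefront_y t hH hu
  have hε : 0 < 1 - t * (B * C) := sub_pos.mpr (mul_lt_one_of_lt_one_div ht.le ht')
  have hlow : ∀ q, 1 - t * (B * C) ≤ x' q := fun q =>
    one_sub_mul_le_one_add_mul ht.le (hB q) (hC _)
  have hx' : ∀ q, 0 < x' q := fun q => hε.trans_le (hlow q)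
  have hsurj := surjective_of_hasDerivAt_of_le hdx hε hlow
  have hinv := leftInverse_invFun (strictMono_of_hasDerivAt_pos hdx hx').injective
  have hdu₀ : ∀ q, DifferentiableAt ℝ u₀ q := hu.differentiable two_ne_zero
  have hdw : ∀ p, HasDerivAt w (p * (t * deriv (deriv H) p)) p := hw ▸ hasDerivAt_wavefront_w t hH
  have hdz : ∀ p, HasDerivAt z (t * deriv (deriv H) p) p := hz ▸ hasDerivAt_wavefront_z t hH
  refine ⟨fun q => ⟨(hdx q).deriv, (hdx q).deriv ▸ hx' q, ?_⟩,
    ⟨yt ∘ invFun xt, ?_, fun q => ⟨?_, ?_⟩⟩, fun I => ⟨fun h => ?_, fun h => ?_⟩, fun p => ?_, fun p hp => ?_⟩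
  · rw [(hdy q).deriv, (hdx q).deriv]
  · exact contDiff_one_comp_invFun hsurj hdx hx' hdy (hu.continuous_deriv one_le_two)
  · rw [comp_apply, hinv]
  · exact (hasDerivAt_comp_invFun hsurj hdx hx' hdy q).deriv
  · exact convexOn_image_comp_invFun hsurj hdx hx' hdy h.1 (h.monotoneOn_deriv fun q _ => hdu₀ q)
  · exact concaveOn_image_comp_invFun hsurj hdx hx' hdy h.1 (h.antitoneOn_deriv fun q _ => hdu₀ q)
  · rw [(hdw p).deriv, (hdz p).deriv]
  · rw [(hdw p).deriv, (hdz p).deriv]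
    exact mul_div_cancel_right₀ p (mul_ne_zero ht.ne' hp)
end

section
/- Let H : ℝ → ℝ be a C² Hamiltonian, let U be an open neighborhood of a point (t,q) in (0,∞) × ℝ, let f₁, f₂ : U → ℝ be C¹ functions satisfying ∂ₜf_i + H(∂_q f_i) = 0 on U for i = 1,2, and set u = min(f₁, f₂) on U. Assume f₁(t,q) = f₂(t,q) and set p₁ = ∂_q f₁(t,q), p₂ = ∂_q f₂(t,q). Then u is a viscosity solution at (t,q) if and only if the Oleinik entropy condition is satisfied between p₁ and p₂, i.e. H(μp₁ + (1−μ)p₂) ≤ μH(p₁) + (1−μ)H(p₂) for all μ ∈ (0,1). -/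
/-!
Where `f₁ = f₂`, a `C¹` function `φ` touching `u = min f₁ f₂` from above must have its
differential in the segment `[Df₁, Df₂]`: otherwise some direction increases both `f₁ - φ` and
`f₂ - φ`, and two linear forms with no common positive direction are non-positively
proportional. Conversely every point of that segment is realised by a `C¹` extension of the
convex combination `μ f₁ + (1 - μ) f₂ ≥ u`. As `Dfᵢ = (-H pᵢ, pᵢ)`, the subsolution inequality
on the segment is exactly the entropy condition. A `φ` touching `u` from below touches `f₁`,
so `Dφ = Df₁` and the supersolution inequality holds with equality.
-/

open Filter Topology Set

noncomputable section

/-- `∂ₜf + H(∂_q f)` at `x = (t, q)`. -/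
def hjOperator (H : ℝ → ℝ) (f : ℝ × ℝ → ℝ) (x : ℝ × ℝ) : ℝ :=
  deriv (fun s => f (s, x.2)) x.1 + H (deriv (fun y => f (x.1, y)) x.2)

def IsViscositySubsolutionAt (H : ℝ → ℝ) (u : ℝ × ℝ → ℝ) (x : ℝ × ℝ) : Prop :=
  ∀ φ : ℝ × ℝ → ℝ, ContDiff ℝ 1 φ → IsLocalMax (fun y => u y - φ y) x → hjOperator H φ x ≤ 0

def IsViscositySupersolutionAt (H : ℝ → ℝ) (u : ℝ × ℝ → ℝ) (x : ℝ × ℝ) : Prop :=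
  ∀ φ : ℝ × ℝ → ℝ, ContDiff ℝ 1 φ → IsLocalMin (fun y => u y - φ y) x → 0 ≤ hjOperator H φ x

def EntropyCondition (H : ℝ → ℝ) (p₁ p₂ : ℝ) : Prop :=
  ∀ μ ∈ Ioo (0 : ℝ) 1, H (μ * p₁ + (1 - μ) * p₂) ≤ μ * H p₁ + (1 - μ) * H p₂

theorem EntropyCondition.le_of_nonneg {H : ℝ → ℝ} {p₁ p₂ μ ν : ℝ}
    (h : EntropyCondition H p₁ p₂) (hμ : 0 ≤ μ) (hν : 0 ≤ ν) (hμν : μ + ν = 1) :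
    H (μ * p₁ + ν * p₂) ≤ μ * H p₁ + ν * H p₂ := by
  obtain rfl : ν = 1 - μ := by linarith
  rcases hμ.eq_or_lt with rfl | hμ
  · simp
  rcases hν.eq_or_lt with hν0 | hν
  · obtain rfl : μ = 1 := by linarith
    simp
  exact h μ ⟨hμ, by linarith⟩

section Slices

variable {𝕜 F : Type*} [NontriviallyNormedField 𝕜] [NormedAddCommGroup F] [NormedSpace 𝕜 F]
  {f : 𝕜 × 𝕜 → F} {L : 𝕜 × 𝕜 →L[𝕜] F} {a b : 𝕜}

theorem HasFDerivAt.deriv_comp_prodMk_left (h : HasFDerivAt f L (a, b)) :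
    deriv (fun s => f (s, b)) a = L (1, 0) :=
  (h.comp_hasDerivAt a ((hasDerivAt_id a).prodMk (hasDerivAt_const a b))).deriv

theorem HasFDerivAt.deriv_comp_prodMk_right (h : HasFDerivAt f L (a, b)) :
    deriv (fun y => f (a, y)) b = L (0, 1) :=
  (h.comp_hasDerivAt b ((hasDerivAt_const b a).prodMk (hasDerivAt_id b))).deriv

end Slices

theorem HasFDerivAt.hjOperator_eq {f : ℝ × ℝ → ℝ} {L : ℝ × ℝ →L[ℝ] ℝ} {x : ℝ × ℝ}
    (h : HasFDerivAt f L x) (H : ℝ → ℝ) : hjOperator H f x = L (1, 0) + H (L (0, 1)) := by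
  rw [hjOperator, h.deriv_comp_prodMk_left, h.deriv_comp_prodMk_right]

theorem ContDiffOn.exists_contDiff_eventuallyEq {E F : Type*} [NormedAddCommGroup E]
    [NormedSpace ℝ E] [FiniteDimensional ℝ E] [NormedAddCommGroup F] [NormedSpace ℝ F]
    {n : ℕ∞} {f : E → F} {U : Set E} {x : E} (hf : ContDiffOn ℝ n f U) (hU : IsOpen U)
    (hx : x ∈ U) : ∃ φ : E → F, ContDiff ℝ n φ ∧ φ =ᶠ[𝓝 x] f := by
  obtain ⟨r, hr, hrU⟩ := Metric.isOpen_iff.mp hU x hx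
  let χ : ContDiffBump x := ⟨r / 3, r / 2, by positivity, by linarith⟩
  have hχU : tsupport χ ⊆ U :=
    χ.tsupport_eq ▸ (Metric.closedBall_subset_ball (by simp [χ]; linarith)).trans hrU
  refine ⟨fun y => χ y • f y, contDiff_iff_contDiffAt.mpr fun y => ?_, ?_⟩
  · by_cases hy : y ∈ U
    · exact χ.contDiff.contDiffAt.smul (hf.contDiffAt (hU.mem_nhds hy))
    · have hy' : y ∉ tsupport fun y => χ y • f y :=
        fun h => hy (hχU (tsupport_smul_subset_left _ _ h))
      exact contDiffAt_const.congr_of_eventuallyEq (notMem_tsupport_iff_eventuallyEq.mp hy')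
  · filter_upwards [χ.eventuallyEq_one] with y hy
    simp [hy]

theorem HasDerivAt.eventually_lt_of_pos {g : ℝ → ℝ} {d a : ℝ} (hg : HasDerivAt g d a)
    (hd : 0 < d) : ∀ᶠ s in 𝓝[>] a, g a < g s := by
  filter_upwards [nhdsGT_le_nhdsNE a
      ((hasDerivAt_iff_tendsto_slope.mp hg).eventually (eventually_gt_nhds hd)),
    self_mem_nhdsWithin] with s hs has
  exact (slope_pos_iff_of_le has.le).mp hs

section LocalMaxOfMin

variable {E : Type*} [NormedAddCommGroup E] [NormedSpace ℝ E] {f₁ f₂ φ : E → ℝ}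
  {L₁ L₂ L : E →L[ℝ] ℝ} {x : E}

theorem min_apply_nonpos_of_isLocalMax_min (hf₁ : HasFDerivAt f₁ L₁ x)
    (hf₂ : HasFDerivAt f₂ L₂ x) (heq : f₁ x = f₂ x)
    (hmax : IsLocalMax (fun y => min (f₁ y) (f₂ y)) x) (w : E) :
    min (L₁ w) (L₂ w) ≤ 0 := by
  by_contra! hpos
  obtain ⟨hpos₁, hpos₂⟩ := lt_min_iff.mp hpos
  set γ : ℝ → E := fun s => x + s • w
  have hγ0 : γ 0 = x := by simp [γ]
  have hγ : HasDerivAt γ w 0 :=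
    (((hasDerivAt_id (0 : ℝ)).smul_const w).const_add x).congr_deriv (one_smul ℝ w)
  have hup₁ := (hf₁.comp_hasDerivAt_of_eq 0 hγ hγ0.symm).eventually_lt_of_pos hpos₁
  have hup₂ := (hf₂.comp_hasDerivAt_of_eq 0 hγ hγ0.symm).eventually_lt_of_pos hpos₂
  have hle : ∀ᶠ s in 𝓝[>] (0 : ℝ), min (f₁ (γ s)) (f₂ (γ s)) ≤ min (f₁ x) (f₂ x) :=
    nhdsWithin_le_nhds (hγ0 ▸ hγ.continuousAt.tendsto |>.eventually hmax)
  obtain ⟨s, h₁, h₂, h⟩ := (hup₁.and (hup₂.and hle)).exists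
  simp only [Function.comp_apply, hγ0] at h₁ h₂
  rw [← heq, min_self] at h
  exact (lt_min h₁ (heq ▸ h₂)).not_ge h

end LocalMaxOfMin

theorem zero_mem_segment_of_forall_min_nonpos {𝕜 E : Type*} [Field 𝕜] [LinearOrder 𝕜]
    [IsStrictOrderedRing 𝕜] [AddCommGroup E] [Module 𝕜 E] {a b : E →ₗ[𝕜] 𝕜}
    (h : ∀ w, min (a w) (b w) ≤ 0) : (0 : E →ₗ[𝕜] 𝕜) ∈ segment 𝕜 a b := by
  rcases eq_or_ne a 0 with rfl | ha
  · exact left_mem_segment 𝕜 0 b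
  obtain ⟨v, hv⟩ : ∃ v, 0 < a v := by
    obtain ⟨v, hv⟩ := not_forall.mp (mt LinearMap.ext ha)
    rcases Ne.lt_or_gt hv with hv | hv
    · exact ⟨-v, by simpa using hv⟩
    · exact ⟨v, hv⟩
  have hbv : b v ≤ 0 := (min_le_iff.mp (h v)).resolve_left hv.not_ge
  -- If `a w = 0 ≠ b w`, then `v + s • w` with `b (v + s • w) = 1` is positive for both.
  have hker : ∀ w, a w = 0 → b w = 0 := by
    intro w haw
    by_contra hbw
    have := h (v + ((1 - b v) / b w) • w)
    simp only [map_add, map_smul, haw, smul_eq_mul, mul_zero, add_zero,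
      div_mul_cancel₀ _ hbw, add_sub_cancel, min_le_iff] at this
    exact this.elim hv.not_ge (by norm_num)
  set c := b v / a v
  have hba : b = c • a := by
    ext w
    have := hker (w - (a w / a v) • v) (by simp [hv.ne'])
    simp only [map_sub, map_smul, smul_eq_mul, sub_eq_zero] at this
    simp only [LinearMap.smul_apply, smul_eq_mul, this, c]
    ring
  have hc : c ≤ 0 := div_nonpos_of_nonpos_of_nonneg hbv hv.le
  have h1c : 0 < 1 - c := by linarith
  refine ⟨-c / (1 - c), 1 / (1 - c), div_nonneg (by linarith) h1c.le, by positivity,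
    by field_simp; ring, ?_⟩
  rw [hba, smul_smul, ← add_smul]
  convert zero_smul 𝕜 a
  field_simp
  ring

theorem HasFDerivAt.mem_segment_of_isLocalMax_min_sub {E : Type*} [NormedAddCommGroup E]
    [NormedSpace ℝ E] {f₁ f₂ φ : E → ℝ} {L₁ L₂ L : E →L[ℝ] ℝ} {x : E}
    (hφ : HasFDerivAt φ L x) (hf₁ : HasFDerivAt f₁ L₁ x) (hf₂ : HasFDerivAt f₂ L₂ x)
    (heq : f₁ x = f₂ x) (hmax : IsLocalMax (fun y => min (f₁ y) (f₂ y) - φ y) x) :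
    L ∈ segment ℝ L₁ L₂ := by
  have hmin : ∀ w, min ((L₁ - L) w) ((L₂ - L) w) ≤ 0 :=
    min_apply_nonpos_of_isLocalMax_min (hf₁.sub hφ) (hf₂.sub hφ)
      (by simp only [Pi.sub_apply, heq])
      (by simpa only [Pi.sub_apply, min_sub_sub_right] using hmax)
  obtain ⟨μ, ν, hμ, hν, hμν, h⟩ := zero_mem_segment_of_forall_min_nonpos hmin
  refine ⟨μ, ν, hμ, hν, hμν, ContinuousLinearMap.ext fun w => ?_⟩
  have hw := LinearMap.congr_fun h w
  simp only [LinearMap.add_apply, LinearMap.smul_apply, ContinuousLinearMap.coe_coe,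
    sub_apply, smul_eq_mul, LinearMap.zero_apply] at hw
  simp only [add_apply, smul_apply, smul_eq_mul]
  linear_combination hw + L w * hμν

section MinOfTwoSolutions

variable {H : ℝ → ℝ} {f₁ f₂ : ℝ × ℝ → ℝ} {L₁ L₂ : ℝ × ℝ →L[ℝ] ℝ} {x : ℝ × ℝ}

theorem isViscositySupersolutionAt_min (hf₁ : HasFDerivAt f₁ L₁ x) (hle : f₁ x ≤ f₂ x)
    (hpde₁ : L₁ (1, 0) + H (L₁ (0, 1)) = 0) :
    IsViscositySupersolutionAt H (fun y => min (f₁ y) (f₂ y)) x := by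
  intro φ hφ hmin
  have hL := (hφ.differentiable one_ne_zero x).hasFDerivAt
  have hmin₁ : IsLocalMin (fun y => f₁ y - φ y) x := by
    filter_upwards [hmin] with y hy
    simp only [min_eq_left hle] at hy
    linarith [min_le_left (f₁ y) (f₂ y)]
  have hL₁ : L₁ = fderiv ℝ φ x := sub_eq_zero.mp (hmin₁.hasFDerivAt_eq_zero (hf₁.sub hL))
  rw [hL.hjOperator_eq, ← hL₁, hpde₁]

theorem isViscositySubsolutionAt_min (hf₁ : HasFDerivAt f₁ L₁ x) (hf₂ : HasFDerivAt f₂ L₂ x)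
    (heq : f₁ x = f₂ x) (hpde₁ : L₁ (1, 0) + H (L₁ (0, 1)) = 0)
    (hpde₂ : L₂ (1, 0) + H (L₂ (0, 1)) = 0) (hent : EntropyCondition H (L₁ (0, 1)) (L₂ (0, 1))) :
    IsViscositySubsolutionAt H (fun y => min (f₁ y) (f₂ y)) x := by
  intro φ hφ hmax
  have hL := (hφ.differentiable one_ne_zero x).hasFDerivAt
  obtain ⟨μ, ν, hμ, hν, hμν, hLμν⟩ := hL.mem_segment_of_isLocalMax_min_sub hf₁ hf₂ heq hmax
  rw [hL.hjOperator_eq, ← hLμν]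
  simp only [add_apply, smul_apply, smul_eq_mul]
  linear_combination hent.le_of_nonneg hμ hν hμν + μ * hpde₁ + ν * hpde₂

theorem entropyCondition_of_isViscositySubsolutionAt_min {U : Set (ℝ × ℝ)} (hU : IsOpen U)
    (hx : x ∈ U) (hf₁ : ContDiffOn ℝ 1 f₁ U) (hf₂ : ContDiffOn ℝ 1 f₂ U)
    (hd₁ : HasFDerivAt f₁ L₁ x) (hd₂ : HasFDerivAt f₂ L₂ x) (heq : f₁ x = f₂ x)
    (hpde₁ : L₁ (1, 0) + H (L₁ (0, 1)) = 0) (hpde₂ : L₂ (1, 0) + H (L₂ (0, 1)) = 0)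
    (hsub : IsViscositySubsolutionAt H (fun y => min (f₁ y) (f₂ y)) x) :
    EntropyCondition H (L₁ (0, 1)) (L₂ (0, 1)) := by
  intro μ ⟨hμ0, hμ1⟩
  -- Test with a `C¹` extension of `μ f₁ + (1 - μ) f₂`, which touches `min f₁ f₂` from above.
  obtain ⟨φ, hφ, hφg⟩ := ((contDiffOn_const (c := μ)).mul hf₁ |>.add
    ((contDiffOn_const (c := 1 - μ)).mul hf₂)).exists_contDiff_eventuallyEq hU hx
  have hdφ : HasFDerivAt φ (μ • L₁ + (1 - μ) • L₂) x :=
    ((hd₁.const_mul μ).add (hd₂.const_mul (1 - μ))).congr_of_eventuallyEq hφg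
  have hmax : IsLocalMax (fun y => min (f₁ y) (f₂ y) - φ y) x := by
    filter_upwards [hφg] with y hy
    rw [hy, hφg.eq_of_nhds, heq, min_self]
    nlinarith [min_le_left (f₁ y) (f₂ y), min_le_right (f₁ y) (f₂ y)]
  have hφx := hsub φ hφ hmax
  rw [hdφ.hjOperator_eq] at hφx
  simp only [add_apply, smul_apply, smul_eq_mul] at hφx
  linear_combination hφx - μ * hpde₁ - (1 - μ) * hpde₂

end MinOfTwoSolutions

theorem statement9_general (H : ℝ → ℝ)
    (U : Set (ℝ × ℝ)) (hUopen : IsOpen U)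
    (t q : ℝ) (htq : (t, q) ∈ U)
    (f₁ f₂ : ℝ × ℝ → ℝ)
    (hf₁ : ContDiffOn ℝ 1 f₁ U) (hf₂ : ContDiffOn ℝ 1 f₂ U)
    (hpde₁ : ∀ x ∈ U,
      deriv (fun s => f₁ (s, x.2)) x.1 + H (deriv (fun y => f₁ (x.1, y)) x.2) = 0)
    (hpde₂ : ∀ x ∈ U,
      deriv (fun s => f₂ (s, x.2)) x.1 + H (deriv (fun y => f₂ (x.1, y)) x.2) = 0)
    (heq : f₁ (t, q) = f₂ (t, q))
    (p₁ p₂ : ℝ)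
    (hp₁ : p₁ = deriv (fun y => f₁ (t, y)) q)
    (hp₂ : p₂ = deriv (fun y => f₂ (t, y)) q) :
    ((∀ φ : ℝ × ℝ → ℝ, ContDiff ℝ 1 φ →
        IsLocalMax (fun y => min (f₁ y) (f₂ y) - φ y) (t, q) →
        deriv (fun s => φ (s, q)) t + H (deriv (fun y => φ (t, y)) q) ≤ 0) ∧
     (∀ φ : ℝ × ℝ → ℝ, ContDiff ℝ 1 φ →
        IsLocalMin (fun y => min (f₁ y) (f₂ y) - φ y) (t, q) →
        deriv (fun s => φ (s, q)) t + H (deriv (fun y => φ (t, y)) q) ≥ 0))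
    ↔ (∀ μ ∈ Set.Ioo (0:ℝ) 1,
        H (μ * p₁ + (1 - μ) * p₂) ≤ μ * H p₁ + (1 - μ) * H p₂) := by
  have hd₁ := ((hf₁.differentiableOn one_ne_zero).differentiableAt
    (hUopen.mem_nhds htq)).hasFDerivAt
  have hd₂ := ((hf₂.differentiableOn one_ne_zero).differentiableAt
    (hUopen.mem_nhds htq)).hasFDerivAt
  have hpde₁' := (hd₁.hjOperator_eq H).symm.trans (hpde₁ _ htq)
  have hpde₂' := (hd₂.hjOperator_eq H).symm.trans (hpde₂ _ htq)
  rw [hp₁, hp₂, hd₁.deriv_comp_prodMk_right, hd₂.deriv_comp_prodMk_right]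
  change IsViscositySubsolutionAt H _ (t, q) ∧ IsViscositySupersolutionAt H _ (t, q) ↔
    EntropyCondition H _ _
  exact ⟨fun h => entropyCondition_of_isViscositySubsolutionAt_min hUopen htq hf₁ hf₂ hd₁ hd₂
      heq hpde₁' hpde₂' h.1,
    fun hent => ⟨isViscositySubsolutionAt_min hd₁ hd₂ heq hpde₁' hpde₂' hent,
      isViscositySupersolutionAt_min hd₁ heq.le hpde₁'⟩⟩

/-- (Oleinik's entropy criterion.) If `u = min(f₁,f₂)` near `(t,q)` with
`f₁, f₂` two `C¹` solutions of `∂ₜf + H(∂_q f) = 0` agreeing at `(t,q)`, then `u` is a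
viscosity solution at `(t,q)` if and only if the entropy condition is satisfied between
`p₁ = ∂_q f₁(t,q)` and `p₂ = ∂_q f₂(t,q)`. -/
theorem statement9 (H : ℝ → ℝ) (hH : ContDiff ℝ 2 H)
    (U : Set (ℝ × ℝ)) (hUopen : IsOpen U) (hU : U ⊆ Set.Ioi 0 ×ˢ Set.univ)
    (t q : ℝ) (htq : (t, q) ∈ U)
    (f₁ f₂ : ℝ × ℝ → ℝ)
    (hf₁ : ContDiffOn ℝ 1 f₁ U) (hf₂ : ContDiffOn ℝ 1 f₂ U)
    (hpde₁ : ∀ x ∈ U,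
      deriv (fun s => f₁ (s, x.2)) x.1 + H (deriv (fun y => f₁ (x.1, y)) x.2) = 0)
    (hpde₂ : ∀ x ∈ U,
      deriv (fun s => f₂ (s, x.2)) x.1 + H (deriv (fun y => f₂ (x.1, y)) x.2) = 0)
    (heq : f₁ (t, q) = f₂ (t, q))
    (p₁ p₂ : ℝ)
    (hp₁ : p₁ = deriv (fun y => f₁ (t, y)) q)
    (hp₂ : p₂ = deriv (fun y => f₂ (t, y)) q) :
    ((∀ φ : ℝ × ℝ → ℝ, ContDiff ℝ 1 φ →
        IsLocalMax (fun y => min (f₁ y) (f₂ y) - φ y) (t, q) →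
        deriv (fun s => φ (s, q)) t + H (deriv (fun y => φ (t, y)) q) ≤ 0) ∧
     (∀ φ : ℝ × ℝ → ℝ, ContDiff ℝ 1 φ →
        IsLocalMin (fun y => min (f₁ y) (f₂ y) - φ y) (t, q) →
        deriv (fun s => φ (s, q)) t + H (deriv (fun y => φ (t, y)) q) ≥ 0))
    ↔ (∀ μ ∈ Set.Ioo (0:ℝ) 1,
        H (μ * p₁ + (1 - μ) * p₂) ≤ μ * H p₁ + (1 - μ) * H p₂) :=
  statement9_general H U hUopen t q htq f₁ f₂ hf₁ hf₂ hpde₁ hpde₂ heq p₁ p₂ hp₁ hp₂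
end
end

section
/- Let A : ℝ^n → M_n(ℝ) be a continuous matrix-valued function and let U₁ and U₂ be disjoint nonempty open subsets of ℝ^n such that A(x) ≠ 0 for every x ∈ U₁ ∪ U₂. Then there exists (x₁, x₂) ∈ U₁ × U₂ such that A(x₁)(x₁ − x₂) ≠ 0 and A(x₂)(x₁ − x₂) ≠ 0, i.e. x₁ − x₂ ∉ Ker A(x₁) ∪ Ker A(x₂). -/
open Filter Topology Set Matrix

noncomputable section

/-!
A nonzero linear map cannot vanish on a translate of a nonempty open set, since a subspace with
nonempty interior is the whole space. Pick `a ∈ U₁`; this gives `x₂ ∈ U₂` with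
`A a (a - x₂) ≠ 0`. Then `W = {y ∈ U₁ | A y (y - x₂) ≠ 0}` is open by continuity of `A`
and contains `a`, so applying the same fact to `A x₂` on `W` gives `x₁ ∈ W` with
`A x₂ (x₁ - x₂) ≠ 0`.
-/

theorem LinearMap.exists_map_sub_ne_zero_of_isOpen {𝕜 E F : Type*} [NontriviallyNormedField 𝕜]
    [AddCommGroup E] [TopologicalSpace E] [IsTopologicalAddGroup E] [Module 𝕜 E]
    [ContinuousSMul 𝕜 E] [AddCommGroup F] [Module 𝕜 F] {f : E →ₗ[𝕜] F} (hf : f ≠ 0)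
    {S : Set E} (hS : IsOpen S) (hne : S.Nonempty) (c : E) : ∃ v ∈ S, f (v - c) ≠ 0 := by
  by_contra! h
  have hker : (fun v ↦ v - c) '' S ⊆ interior (ker f : Set E) :=
    (isOpenMap_sub_right c _ hS).subset_interior_iff.2 <| by
      rintro _ ⟨v, hv, rfl⟩
      exact h v hv
  exact hf <| ker_eq_top.1 <| (ker f).eq_top_of_nonempty_interior' ((hne.image _).mono hker)

theorem Matrix.exists_mulVec_sub_ne_zero_of_isOpen {𝕜 : Type*} [NontriviallyNormedField 𝕜]
    {n : Type*} [Fintype n] [DecidableEq n] {M : Matrix n n 𝕜} (hM : M ≠ 0)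
    {S : Set (n → 𝕜)} (hS : IsOpen S) (hne : S.Nonempty) (c : n → 𝕜) :
    ∃ v ∈ S, M *ᵥ (v - c) ≠ 0 :=
  LinearMap.exists_map_sub_ne_zero_of_isOpen (toLin'.map_ne_zero_iff.2 hM) hS hne c

theorem statement11_general (n : ℕ) (A : (Fin n → ℝ) → Matrix (Fin n) (Fin n) ℝ)
    (hA : Continuous A)
    (U₁ U₂ : Set (Fin n → ℝ))
    (hU₁ : IsOpen U₁) (hU₂ : IsOpen U₂)
    (hne₁ : U₁.Nonempty) (hne₂ : U₂.Nonempty)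
    (hA₁ : ∀ x ∈ U₁ ∪ U₂, A x ≠ 0) :
    ∃ x₁ ∈ U₁, ∃ x₂ ∈ U₂,
      A x₁ *ᵥ (x₁ - x₂) ≠ 0 ∧ A x₂ *ᵥ (x₁ - x₂) ≠ 0 := by
  obtain ⟨a, ha⟩ := hne₁
  obtain ⟨x₂, hx₂, hax₂⟩ :=
    exists_mulVec_sub_ne_zero_of_isOpen (hA₁ a (.inl ha)) hU₂ hne₂ a
  set W := U₁ ∩ {y | A y *ᵥ (y - x₂) ≠ 0}
  have hW : IsOpen W :=
    hU₁.inter <| isOpen_ne_fun (hA.matrix_mulVec (continuous_id.sub continuous_const))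
      continuous_const
  have haW : a ∈ W :=
    ⟨ha, show A a *ᵥ (a - x₂) ≠ 0 by rwa [← neg_sub, mulVec_neg, neg_ne_zero]⟩
  obtain ⟨x₁, ⟨hx₁, hx₁x₂⟩, hx₂x₁⟩ :=
    exists_mulVec_sub_ne_zero_of_isOpen (hA₁ x₂ (.inr hx₂)) hW ⟨a, haW⟩ x₂
  exact ⟨x₁, hx₁, x₂, hx₂, hx₁x₂, hx₂x₁⟩

/-- If `A : ℝ^n → M_n(ℝ)` is continuous and `U₁`, `U₂` are disjoint
nonempty open sets on which `A` does not vanish, there exists `(x₁,x₂) ∈ U₁ × U₂` with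
`x₁ − x₂ ∉ Ker A(x₁) ∪ Ker A(x₂)`. -/
theorem statement11 (n : ℕ) (A : (Fin n → ℝ) → Matrix (Fin n) (Fin n) ℝ)
    (hA : Continuous A)
    (U₁ U₂ : Set (Fin n → ℝ))
    (hU₁ : IsOpen U₁) (hU₂ : IsOpen U₂)
    (hne₁ : U₁.Nonempty) (hne₂ : U₂.Nonempty)
    (hdisj : Disjoint U₁ U₂)
    (hA₁ : ∀ x ∈ U₁ ∪ U₂, A x ≠ 0) :
    ∃ x₁ ∈ U₁, ∃ x₂ ∈ U₂,
      A x₁ *ᵥ (x₁ - x₂) ≠ 0 ∧ A x₂ *ᵥ (x₁ - x₂) ≠ 0 :=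
  statement11_general n A hA U₁ U₂ hU₁ hU₂ hne₁ hne₂ hA₁
end
end

section
/- Let H : ℝ → ℝ be a C² function which is neither convex nor concave. Then there exists ε ∈ {1, −1} such that the function G(p) = H(εp) admits points p₁ < p₂ with: G''(p₂) < 0; the strict entropy inequality (G(p) − G(p₁))/(p − p₁) < (G(p₂) − G(p₁))/(p₂ − p₁) for all p ∈ (p₁, p₂); and G'(p₁) < (G(p₂) − G(p₁))/(p₂ − p₁) = G'(p₂). -/
/-!
Suppose `G'' > 0` at `a` and `G'' < 0` at some `b > a`, and let `c` be the first point after `a`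
where `G''` turns negative. `G` is convex on `[a, c]`, so `G a` lies strictly above the tangent
line at `c`, hence also above the tangent line `ℓ` at any `w` close to `c` with `G'' w < 0`; by
Sard's theorem for `G'` we may moreover take `G' w` to be a regular value of `G'`. Let `p₂` be the
first point of `[a, w]` where `ℓ` is again tangent to `G` with `G'' ≤ 0` (so `G'' p₂ < 0` by
regularity) and `p₁` the last point before `p₂` where `G` meets `ℓ`. Then `G < ℓ` on `(p₁, p₂)`,
which is the entropy inequality, and `ℓ` cannot be tangent at `p₁`: `G'' p₁ = 0` is excluded by
regularity, `G'' p₁ < 0` by the choice of `p₂`, and `G'' p₁ > 0` because `G < ℓ` right of `p₁`.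
For `H` itself, the reflection `p ↦ -p` puts a point with `H'' > 0` left of one with `H'' < 0`.
-/

open Filter Topology Set MeasureTheory

theorem eventually_nhdsGT_lt_of_hasDerivAt_pos {f : ℝ → ℝ} {f' x : ℝ} (hf : HasDerivAt f f' x)
    (hf' : 0 < f') : ∀ᶠ y in 𝓝[>] x, f x < f y := by
  have hslope := (hasDerivAt_iff_tendsto_slope.1 hf).mono_left (nhdsGT_le_nhdsNE x)
  filter_upwards [hslope.eventually (eventually_gt_nhds hf'), self_mem_nhdsWithin] with y hy hxy
  exact (slope_pos_iff hxy).1 hy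

theorem eventually_nhdsLT_lt_of_hasDerivAt_neg {f : ℝ → ℝ} {f' x : ℝ} (hf : HasDerivAt f f' x)
    (hf' : f' < 0) : ∀ᶠ y in 𝓝[<] x, f x < f y := by
  have hslope := (hasDerivAt_iff_tendsto_slope.1 hf).mono_left (nhdsLT_le_nhdsNE x)
  filter_upwards [hslope.eventually (eventually_lt_nhds hf'), self_mem_nhdsWithin] with y hy hyx
  rw [slope_comm] at hy
  exact (slope_neg_iff_of_le hyx.le).1 hy

theorem eventually_nhdsGT_lt_of_deriv_pos {f : ℝ → ℝ} {x : ℝ} (hf : Continuous f)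
    (h : ∀ᶠ y in 𝓝[>] x, 0 < deriv f y) : ∀ᶠ y in 𝓝[>] x, f x < f y := by
  obtain ⟨c, hxc, hc⟩ := mem_nhdsGT_iff_exists_Ioo_subset.1 h
  have hmono : StrictMonoOn f (Icc x c) :=
    strictMonoOn_of_deriv_pos (convex_Icc x c) hf.continuousOn (by rwa [interior_Icc])
  filter_upwards [Ioc_mem_nhdsGT hxc] with y hy
  exact hmono (left_mem_Icc.2 hxc.le) (Ioc_subset_Icc_self hy) hy.1

theorem eventually_nhdsLT_lt_of_deriv_pos {f : ℝ → ℝ} {x : ℝ} (hf : Continuous f)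
    (h : ∀ᶠ y in 𝓝[<] x, 0 < deriv f y) : ∀ᶠ y in 𝓝[<] x, f y < f x := by
  obtain ⟨c, hcx, hc⟩ := mem_nhdsLT_iff_exists_Ioo_subset.1 h
  have hmono : StrictMonoOn f (Icc c x) :=
    strictMonoOn_of_deriv_pos (convex_Icc c x) hf.continuousOn (by rwa [interior_Icc])
  filter_upwards [Ico_mem_nhdsLT hcx] with y hy
  exact hmono (Ico_subset_Icc_self hy) (right_mem_Icc.2 hcx.le) hy.2

theorem exists_last_zero_of_eventually_neg {ζ : ℝ → ℝ} (hζ : Continuous ζ) {a b : ℝ} (hab : a < b)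
    (ha : 0 ≤ ζ a) (hb : ∀ᶠ x in 𝓝[<] b, ζ x < 0) :
    ∃ p ∈ Ico a b, ζ p = 0 ∧ ∀ x ∈ Ioo p b, ζ x < 0 := by
  obtain ⟨l, hlb, hl⟩ := mem_nhdsLT_iff_exists_Ioo_subset.1 hb
  set c := max l a
  have hcb : c < b := max_lt hlb hab
  set A := Icc a c ∩ {x | 0 ≤ ζ x}
  have hA : IsClosed A := isClosed_Icc.inter (isClosed_le continuous_const hζ)
  have haA : a ∈ A := ⟨⟨le_rfl, le_max_right l a⟩, ha⟩
  have hAbdd : BddAbove A := ⟨c, fun x hx => hx.1.2⟩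
  obtain ⟨⟨hap, hpc⟩, hζp⟩ : sSup A ∈ A := hA.csSup_mem ⟨a, haA⟩ hAbdd
  have hneg : ∀ x ∈ Ioo (sSup A) b, ζ x < 0 := by
    intro x ⟨hpx, hxb⟩
    by_cases hxc : x ≤ c
    · by_contra! hζx
      exact (le_csSup hAbdd ⟨⟨hap.trans hpx.le, hxc⟩, hζx⟩).not_gt hpx
    · exact hl ⟨(le_max_left l a).trans_lt (not_le.1 hxc), hxb⟩
  refine ⟨sSup A, ⟨hap, hpc.trans_lt hcb⟩, le_antisymm ?_ hζp, hneg⟩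
  refine le_of_tendsto (hζ.continuousWithinAt (s := Ioi (sSup A))) ?_
  filter_upwards [Ioo_mem_nhdsGT (hpc.trans_lt hcb)] with x hx
  exact (hneg x hx).le

theorem exists_mem_forall_deriv_eq_zero_ne {f : ℝ → ℝ} (hf : Differentiable ℝ f) {U : Set ℝ}
    (hU : IsOpen U) (hne : U.Nonempty) (hU' : ∀ x ∈ U, deriv f x ≠ 0) :
    ∃ w ∈ U, ∀ x, deriv f x = 0 → f x ≠ f w := by
  -- Sard: the critical values of `f` are null, whereas `f '' U` contains a nontrivial interval.
  have hnull : volume (f '' {x | deriv f x = 0}) = 0 :=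
    addHaar_image_eq_zero_of_det_fderivWithin_eq_zero volume
      (fun x _ => (hf x).hasDerivAt.hasFDerivAt.hasFDerivWithinAt) (fun x hx => by simpa using hx)
  obtain ⟨w₀, hw₀⟩ := hne
  obtain ⟨d, hw₀d, hd⟩ := exists_Ico_subset_of_mem_nhds (hU.mem_nhds hw₀) (exists_gt w₀)
  obtain ⟨c, hw₀c, hcd⟩ := exists_between hw₀d
  have hsub : Icc w₀ c ⊆ U := (Icc_subset_Ico_right hcd).trans hd
  have hfne : f w₀ ≠ f c := fun h => by
    obtain ⟨ξ, hξ, hξ0⟩ := exists_deriv_eq_zero hw₀c hf.continuous.continuousOn h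
    exact hU' ξ (hsub (Ioo_subset_Icc_self hξ)) hξ0
  by_contra! hcrit
  have himage : uIcc (f w₀) (f c) ⊆ f '' {x | deriv f x = 0} := by
    intro y hy
    obtain ⟨z, hz, rfl⟩ := intermediate_value_uIcc hf.continuous.continuousOn hy
    obtain ⟨x, hx, hxz⟩ := hcrit z (hsub (uIcc_of_le hw₀c.le ▸ hz))
    exact ⟨x, hx, hxz⟩
  have := measure_mono_null himage hnull
  rw [Real.volume_interval, ENNReal.ofReal_eq_zero, abs_nonpos_iff, sub_eq_zero] at this
  exact hfne this.symm

noncomputable def tangentGap (G : ℝ → ℝ) (w x : ℝ) : ℝ := G x - (G w + deriv G w * (x - w))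

def IsLaxEntropyShock (G : ℝ → ℝ) (p₁ p₂ : ℝ) : Prop :=
  deriv (deriv G) p₂ < 0 ∧
    (∀ p ∈ Ioo p₁ p₂, (G p - G p₁) / (p - p₁) < (G p₂ - G p₁) / (p₂ - p₁)) ∧
    deriv G p₁ < (G p₂ - G p₁) / (p₂ - p₁) ∧ (G p₂ - G p₁) / (p₂ - p₁) = deriv G p₂

section Tangent

variable {G : ℝ → ℝ}

@[simp]
theorem tangentGap_self (w : ℝ) : tangentGap G w w = 0 := by
  simp [tangentGap]

theorem continuous_tangentGap (hG : Continuous G) (w : ℝ) : Continuous (tangentGap G w) := by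
  unfold tangentGap; fun_prop

theorem hasDerivAt_tangentGap {x : ℝ} (hG : DifferentiableAt ℝ G x) (w : ℝ) :
    HasDerivAt (tangentGap G w) (deriv G x - deriv G w) x := by
  unfold tangentGap
  have := hG.hasDerivAt.fun_sub
    ((((hasDerivAt_id x).sub_const w).const_mul (deriv G w)).const_add (G w))
  simpa using this

theorem hasDerivAt_tangentGap_base {w : ℝ} (hG : DifferentiableAt ℝ G w)
    (hG' : DifferentiableAt ℝ (deriv G) w) (x : ℝ) :
    HasDerivAt (fun w => tangentGap G w x) (deriv (deriv G) w * (w - x)) w := by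
  unfold tangentGap
  exact ((hasDerivAt_const w (G x)).fun_sub (hG.hasDerivAt.fun_add
    (hG'.hasDerivAt.fun_mul ((hasDerivAt_const w x).fun_sub (hasDerivAt_id' w))))).congr_deriv
    (by ring)

theorem tangentGap_eq_of_tangentGap_eq_zero {w p : ℝ} (hp : tangentGap G w p = 0)
    (hd : deriv G p = deriv G w) : tangentGap G p = tangentGap G w := by
  funext x
  simp only [tangentGap] at hp ⊢
  rw [hd]
  linarith

theorem eventually_nhdsGT_tangentGap_pos (hG : Differentiable ℝ G) {p : ℝ}
    (hp : 0 < deriv (deriv G) p) : ∀ᶠ x in 𝓝[>] p, 0 < tangentGap G p x := by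
  have hG' := (differentiableAt_of_deriv_ne_zero hp.ne').hasDerivAt
  have hpos : ∀ᶠ x in 𝓝[>] p, 0 < deriv (tangentGap G p) x := by
    filter_upwards [eventually_nhdsGT_lt_of_hasDerivAt_pos hG' hp] with x hx
    rw [(hasDerivAt_tangentGap (hG x) p).deriv]
    linarith
  simpa using eventually_nhdsGT_lt_of_deriv_pos (continuous_tangentGap hG.continuous p) hpos

theorem eventually_nhdsLT_tangentGap_neg (hG : Differentiable ℝ G) {p : ℝ}
    (hp : deriv (deriv G) p < 0) : ∀ᶠ x in 𝓝[<] p, tangentGap G p x < 0 := by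
  have hG' := (differentiableAt_of_deriv_ne_zero hp.ne).hasDerivAt
  have hpos : ∀ᶠ x in 𝓝[<] p, 0 < deriv (tangentGap G p) x := by
    filter_upwards [eventually_nhdsLT_lt_of_hasDerivAt_neg hG' hp] with x hx
    rw [(hasDerivAt_tangentGap (hG x) p).deriv]
    linarith
  simpa using eventually_nhdsLT_lt_of_deriv_pos (continuous_tangentGap hG.continuous p) hpos

theorem isLaxEntropyShock_of_tangentGap {w p₁ p₂ : ℝ} (h₁₂ : p₁ < p₂)
    (hp₁ : tangentGap G w p₁ = 0) (hp₂ : tangentGap G w p₂ = 0)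
    (hneg : ∀ p ∈ Ioo p₁ p₂, tangentGap G w p < 0) (hlax₁ : deriv G p₁ < deriv G w)
    (hlax₂ : deriv G p₂ = deriv G w) (hconc : deriv (deriv G) p₂ < 0) :
    IsLaxEntropyShock G p₁ p₂ := by
  simp only [tangentGap] at hp₁ hp₂ hneg
  have hchord : (G p₂ - G p₁) / (p₂ - p₁) = deriv G w := by
    rw [div_eq_iff (sub_ne_zero.2 h₁₂.ne')]
    linear_combination hp₂ - hp₁
  refine ⟨hconc, fun p hp => ?_, hchord ▸ hlax₁, hchord.trans hlax₂.symm⟩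
  rw [hchord, div_lt_iff₀ (sub_pos.2 hp.1)]
  linarith [hneg p hp]

theorem exists_deriv2_neg_tangentGap_pos (hG : ContDiff ℝ 2 G) {a b : ℝ} (hab : a < b)
    (ha : 0 < deriv (deriv G) a) (hb : deriv (deriv G) b < 0) :
    ∃ w, a < w ∧ deriv (deriv G) w < 0 ∧ 0 < tangentGap G w a := by
  have hG₁ : Differentiable ℝ G := hG.differentiable two_ne_zero
  have hG₂ : Differentiable ℝ (deriv G) := hG.deriv'.differentiable one_ne_zero
  have hG₃ : Continuous (deriv (deriv G)) := hG.deriv'.continuous_deriv le_rfl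
  set S := {x | a ≤ x ∧ deriv (deriv G) x < 0}
  have hbS : b ∈ S := ⟨hab.le, hb⟩
  have hSbdd : BddBelow S := ⟨a, fun x hx => hx.1⟩
  set c := sInf S
  obtain ⟨d, had, hd⟩ := exists_Ico_subset_of_mem_nhds
    ((isOpen_lt continuous_const hG₃).mem_nhds ha) ⟨b, hab⟩
  have hdc : d ≤ c :=
    le_csInf ⟨b, hbS⟩ fun x hx => not_lt.1 fun hxd => (hd ⟨hx.1, hxd⟩).not_gt hx.2
  have hnonneg : ∀ x ∈ Ico a c, 0 ≤ deriv (deriv G) x :=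
    fun x hx => not_lt.1 fun h => (csInf_le hSbdd ⟨hx.1, h⟩).not_gt hx.2
  set F := fun w => tangentGap G w a
  have hF : ∀ w, HasDerivAt F (deriv (deriv G) w * (w - a)) w :=
    fun w => hasDerivAt_tangentGap_base (hG₁ w) (hG₂ w) a
  have hFcont : Continuous F := continuous_iff_continuousAt.2 fun w => (hF w).continuousAt
  have hFderiv : deriv F = fun w => deriv (deriv G) w * (w - a) := funext fun w => (hF w).deriv
  have hFmono : MonotoneOn F (Icc a c) := by
    refine monotoneOn_of_deriv_nonneg (convex_Icc a c) hFcont.continuousOn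
      (fun w _ => (hF w).differentiableAt.differentiableWithinAt) ?_
    rw [interior_Icc, hFderiv]
    exact fun x hx => mul_nonneg (hnonneg x ⟨hx.1.le, hx.2⟩) (sub_nonneg.2 hx.1.le)
  have hFstrict : StrictMonoOn F (Icc a d) := by
    refine strictMonoOn_of_deriv_pos (convex_Icc a d) hFcont.continuousOn ?_
    rw [interior_Icc, hFderiv]
    exact fun x hx => mul_pos (hd ⟨hx.1.le, hx.2⟩) (sub_pos.2 hx.1)
  have hFc : 0 < F c := calc
    0 = F a := (tangentGap_self a).symm
    _ < F d := hFstrict (left_mem_Icc.2 had.le) (right_mem_Icc.2 had.le) had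
    _ ≤ F c := hFmono ⟨had.le, hdc⟩ ⟨had.le.trans hdc, le_rfl⟩ hdc
  obtain ⟨e, hce, he⟩ := exists_Ico_subset_of_mem_nhds
    ((isOpen_lt continuous_const hFcont).mem_nhds hFc) (exists_gt c)
  obtain ⟨w, hwS, hwe⟩ := exists_lt_of_csInf_lt ⟨b, hbS⟩ hce
  have hcw : c ≤ w := csInf_le hSbdd hwS
  exact ⟨w, had.trans_le (hdc.trans hcw), hwS.2, he ⟨hcw, hwe⟩⟩

theorem exists_isLaxEntropyShock_of_regularValue (hG : ContDiff ℝ 2 G) {a w : ℝ}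
    (haw : a < w) (hw : deriv (deriv G) w < 0) (ha : 0 < tangentGap G w a)
    (hreg : ∀ x, deriv (deriv G) x = 0 → deriv G x ≠ deriv G w) :
    ∃ p₁ p₂, p₁ < p₂ ∧ IsLaxEntropyShock G p₁ p₂ := by
  have hG₁ : Differentiable ℝ G := hG.differentiable two_ne_zero
  have hG₂ : Continuous (deriv G) := hG.continuous_deriv one_le_two
  have hG₃ : Continuous (deriv (deriv G)) := hG.deriv'.continuous_deriv le_rfl
  have hζ := continuous_tangentGap hG₁.continuous w
  set S := Icc a w ∩
    {x | tangentGap G w x = 0 ∧ deriv G x = deriv G w ∧ deriv (deriv G) x ≤ 0}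
  have hS : IsClosed S := isClosed_Icc.inter ((isClosed_eq hζ continuous_const).inter
    ((isClosed_eq hG₂ continuous_const).inter (isClosed_le hG₃ continuous_const)))
  have hSbdd : BddBelow S := ⟨a, fun x hx => hx.1.1⟩
  obtain ⟨⟨hap₂, hp₂w⟩, hζp₂, hlax₂, hp₂⟩ : sInf S ∈ S :=
    hS.csInf_mem ⟨w, ⟨haw.le, le_rfl⟩, tangentGap_self w, rfl, hw.le⟩ hSbdd
  set p₂ := sInf S
  replace hp₂ : deriv (deriv G) p₂ < 0 := hp₂.lt_of_ne fun h => hreg p₂ h hlax₂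
  replace hap₂ : a < p₂ := hap₂.lt_of_ne fun h => by rw [h, hζp₂] at ha; exact ha.false
  obtain ⟨p₁, ⟨hap₁, hp₁₂⟩, hζp₁, hneg⟩ := exists_last_zero_of_eventually_neg hζ hap₂ ha.le
    (tangentGap_eq_of_tangentGap_eq_zero hζp₂ hlax₂ ▸ eventually_nhdsLT_tangentGap_neg hG₁ hp₂)
  have hlax₁ : deriv G p₁ < deriv G w := by
    by_contra! hge
    suffices ∀ᶠ x in 𝓝[>] p₁, 0 < tangentGap G w x by
      obtain ⟨x, hx, hx'⟩ := (this.and (Ioo_mem_nhdsGT hp₁₂)).exists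
      exact (hneg x hx').not_gt hx
    rcases hge.lt_or_eq with hgt | heq
    · simpa [hζp₁] using eventually_nhdsGT_lt_of_hasDerivAt_pos
        (hasDerivAt_tangentGap (hG₁ p₁) w) (sub_pos.2 hgt)
    · have hp₁ : deriv (deriv G) p₁ ≠ 0 := fun h => hreg p₁ h heq.symm
      rcases hp₁.lt_or_gt with hneg₁ | hpos₁
      · exact absurd (csInf_le hSbdd ⟨⟨hap₁, (hp₁₂.trans_le hp₂w).le⟩, hζp₁, heq.symm, hneg₁.le⟩)
          hp₁₂.not_ge
      · exact tangentGap_eq_of_tangentGap_eq_zero hζp₁ heq.symm ▸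
          eventually_nhdsGT_tangentGap_pos hG₁ hpos₁
  exact ⟨p₁, p₂, hp₁₂, isLaxEntropyShock_of_tangentGap hp₁₂ hζp₁ hζp₂ hneg hlax₁ hlax₂ hp₂⟩

theorem exists_isLaxEntropyShock (hG : ContDiff ℝ 2 G) {a b : ℝ} (hab : a < b)
    (ha : 0 < deriv (deriv G) a) (hb : deriv (deriv G) b < 0) :
    ∃ p₁ p₂, p₁ < p₂ ∧ IsLaxEntropyShock G p₁ p₂ := by
  have hG₁ : Differentiable ℝ G := hG.differentiable two_ne_zero
  have hG₂ : Differentiable ℝ (deriv G) := hG.deriv'.differentiable one_ne_zero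
  have hG₃ : Continuous (deriv (deriv G)) := hG.deriv'.continuous_deriv le_rfl
  have hgap : Continuous fun w => tangentGap G w a := continuous_iff_continuousAt.2 fun w =>
    (hasDerivAt_tangentGap_base (hG₁ w) (hG₂ w) a).continuousAt
  have hW : IsOpen {w | a < w ∧ deriv (deriv G) w < 0 ∧ 0 < tangentGap G w a} :=
    (isOpen_lt continuous_const continuous_id).inter
      ((isOpen_lt hG₃ continuous_const).inter (isOpen_lt continuous_const hgap))
  obtain ⟨w, ⟨haw, hw, hwa⟩, hreg⟩ := exists_mem_forall_deriv_eq_zero_ne hG₂ hW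
    (exists_deriv2_neg_tangentGap_pos hG hab ha hb) fun x hx => hx.2.1.ne
  exact exists_isLaxEntropyShock_of_regularValue hG haw hw hwa hreg

end Tangent

theorem deriv_deriv_comp_mul_left (H : ℝ → ℝ) (c x : ℝ) :
    deriv (deriv fun p => H (c * p)) x = c ^ 2 * deriv (deriv H) (c * x) := by
  have h : deriv (fun p => H (c * p)) = fun p => c * deriv H (c * p) :=
    funext fun p => deriv_comp_mul_left c H p
  rw [h, deriv_const_mul_field']
  dsimp only
  rw [deriv_comp_mul_left, smul_eq_mul]
  ring

theorem exists_deriv2_neg_of_not_convexOn {H : ℝ → ℝ} (hH : ContDiff ℝ 2 H)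
    (h : ¬ ConvexOn ℝ univ H) : ∃ x, deriv (deriv H) x < 0 := by
  by_contra! hx
  exact h (convexOn_univ_of_deriv2_nonneg (hH.differentiable two_ne_zero)
    (hH.deriv'.differentiable one_ne_zero) hx)

theorem exists_deriv2_pos_of_not_concaveOn {H : ℝ → ℝ} (hH : ContDiff ℝ 2 H)
    (h : ¬ ConcaveOn ℝ univ H) : ∃ x, 0 < deriv (deriv H) x := by
  by_contra! hx
  exact h (concaveOn_univ_of_deriv2_nonpos (hH.differentiable two_ne_zero)
    (hH.deriv'.differentiable one_ne_zero) hx)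

/-- For a `C²` function `H : ℝ → ℝ`, neither convex nor concave, up to
the change of function `p ↦ H(−p)` there exist `p₁ < p₂` with `H''(p₂) < 0`, the strict
entropy condition between `p₁` and `p₂`, and the Lax condition an equality at `p₂` and a
strict inequality at `p₁`. -/
theorem statement12 (H : ℝ → ℝ) (hH : ContDiff ℝ 2 H)
    (hHnc : ¬ ConvexOn ℝ Set.univ H) (hHncc : ¬ ConcaveOn ℝ Set.univ H) :
    ∃ ε : ℝ, (ε = 1 ∨ ε = -1) ∧ ∃ p₁ p₂ : ℝ, p₁ < p₂ ∧
      ∀ G : ℝ → ℝ, G = (fun p => H (ε * p)) →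
        deriv (deriv G) p₂ < 0 ∧
        (∀ p ∈ Set.Ioo p₁ p₂,
          (G p - G p₁) / (p - p₁) < (G p₂ - G p₁) / (p₂ - p₁)) ∧
        deriv G p₁ < (G p₂ - G p₁) / (p₂ - p₁) ∧
        (G p₂ - G p₁) / (p₂ - p₁) = deriv G p₂ := by
  obtain ⟨x, hx⟩ := exists_deriv2_pos_of_not_concaveOn hH hHncc
  obtain ⟨y, hy⟩ := exists_deriv2_neg_of_not_convexOn hH hHnc
  obtain ⟨ε, hε, hεxy⟩ : ∃ ε : ℝ, (ε = 1 ∨ ε = -1) ∧ ε * x < ε * y := by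
    rcases lt_or_gt_of_ne (show x ≠ y by rintro rfl; linarith) with h | h
    · exact ⟨1, .inl rfl, by linarith⟩
    · exact ⟨-1, .inr rfl, by linarith⟩
  have hε2 : ε ^ 2 = 1 := by rcases hε with rfl | rfl <;> norm_num
  have hG : ContDiff ℝ 2 fun p => H (ε * p) := hH.comp (contDiff_const.mul contDiff_id)
  have hG'' (t : ℝ) : deriv (deriv fun p => H (ε * p)) (ε * t) = deriv (deriv H) t := by
    rw [deriv_deriv_comp_mul_left, hε2, one_mul, ← mul_assoc, ← sq, hε2, one_mul]
  obtain ⟨p₁, p₂, h₁₂, hshock⟩ := exists_isLaxEntropyShock hG hεxy (by rwa [hG'']) (by rwa [hG''])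
  exact ⟨ε, hε, p₁, p₂, h₁₂, fun G hG => hG ▸ hshock⟩
end

section
/- Let H : ℝ^{d₁} × ℝ^{d₂} → ℝ be continuous, fix p₂ ∈ ℝ^{d₂}, and define the reduced Hamiltonian H̄ : ℝ^{d₁} → ℝ by H̄(p₁) = H(p₁, p₂). If u is a viscosity solution of ∂ₜu + H̄(∂_{q₁} u) = 0 on (0,T) × ℝ^{d₁}, then the function v(t, q₁, q₂) = u(t, q₁) + p₂·q₂ is a viscosity solution of ∂ₜv + H(∂_{q₁} v, ∂_{q₂} v) = 0 on (0,T) × ℝ^{d₁} × ℝ^{d₂}. -/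
/-! At a local extremum of `v - φ`, the first-order condition in the `q₂`-direction gives
`∂_{q₂} φ = p₂`, because `v` is affine in `q₂` with gradient `p₂`. Freezing `q₂` turns `φ` into a
test function for `u` with the same `t`- and `q₁`-derivatives, at which `u - φ(·, ·, q₂)` still has
a local extremum; the viscosity inequality for `u` and `H̄` is then literally the one for `v` and
`H`. -/

open Filter Topology Set

noncomputable section

section Gradient

variable {E : Type*} [NormedAddCommGroup E] [InnerProductSpace ℝ E] [CompleteSpace E]

theorem hasGradientAt_const_add_inner (c : ℝ) (p x : E) :
    HasGradientAt (fun q => c + inner ℝ p q) p x := by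
  rw [hasGradientAt_iff_hasFDerivAt]
  exact (innerSL ℝ p).hasFDerivAt.const_add c

theorem IsLocalExtr.gradient_eq_of_hasGradientAt {f g : E → ℝ} {p x : E}
    (hf : HasGradientAt f p x) (hg : DifferentiableAt ℝ g x)
    (h : IsLocalExtr (fun y => f y - g y) x) : gradient g x = p := by
  have h0 := h.hasFDerivAt_eq_zero ((hasGradientAt_iff_hasFDerivAt.mp hf).sub hg.hasFDerivAt)
  rw [sub_eq_zero] at h0
  rw [gradient, ← h0, LinearIsometryEquiv.symm_apply_apply]

end Gradient

section Lift

variable {E₁ E₂ : Type*} [NormedAddCommGroup E₂] [InnerProductSpace ℝ E₂]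

def liftAddInner (u : ℝ × E₁ → ℝ) (p₂ : E₂) (z : ℝ × E₁ × E₂) : ℝ :=
  u (z.1, z.2.1) + inner ℝ p₂ z.2.2

variable {u : ℝ × E₁ → ℝ} {p₂ : E₂}

theorem ContinuousOn.liftAddInner [TopologicalSpace E₁] {I : Set ℝ} (hu : ContinuousOn u (I ×ˢ univ)) :
    ContinuousOn (liftAddInner u p₂) (I ×ˢ univ) :=
  (hu.comp (by fun_prop) fun _ hz => ⟨hz.1, trivial⟩).add (by fun_prop)

theorem sub_slice_eq_liftAddInner_sub (φ : ℝ × E₁ × E₂ → ℝ) (q₂ : E₂) :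
    (fun y => u y - φ (y.1, y.2, q₂)) =
      fun y => (liftAddInner u p₂ (y.1, y.2, q₂) - φ (y.1, y.2, q₂)) - inner ℝ p₂ q₂ := by
  funext y
  simp only [liftAddInner]
  ring

theorem IsLocalMax.sub_slice_of_liftAddInner [TopologicalSpace E₁] {φ : ℝ × E₁ × E₂ → ℝ} {t : ℝ} {q₁ : E₁} {q₂ : E₂}
    (h : IsLocalMax (fun z => liftAddInner u p₂ z - φ z) (t, q₁, q₂)) :
    IsLocalMax (fun y => u y - φ (y.1, y.2, q₂)) (t, q₁) := by
  rw [sub_slice_eq_liftAddInner_sub (p₂ := p₂)]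
  exact (h.comp_continuous (g := fun y : ℝ × E₁ => (y.1, y.2, q₂)) (b := (t, q₁))
      (by fun_prop)).sub isLocalMin_const

theorem IsLocalMin.sub_slice_of_liftAddInner [TopologicalSpace E₁] {φ : ℝ × E₁ × E₂ → ℝ} {t : ℝ} {q₁ : E₁} {q₂ : E₂}
    (h : IsLocalMin (fun z => liftAddInner u p₂ z - φ z) (t, q₁, q₂)) :
    IsLocalMin (fun y => u y - φ (y.1, y.2, q₂)) (t, q₁) := by
  rw [sub_slice_eq_liftAddInner_sub (p₂ := p₂)]
  exact (h.comp_continuous (g := fun y : ℝ × E₁ => (y.1, y.2, q₂)) (b := (t, q₁))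
      (by fun_prop)).sub isLocalMax_const

theorem IsLocalExtr.gradient_slice_eq_of_liftAddInner [NormedAddCommGroup E₁] [NormedSpace ℝ E₁]
    [CompleteSpace E₂]
    {φ : ℝ × E₁ × E₂ → ℝ} {z : ℝ × E₁ × E₂} (hφ : DifferentiableAt ℝ φ z)
    (h : IsLocalExtr (fun z => liftAddInner u p₂ z - φ z) z) :
    gradient (fun q₂ => φ (z.1, z.2.1, q₂)) z.2.2 = p₂ := by
  obtain ⟨t, q₁, q₂⟩ := z
  exact (h.comp_continuous (g := fun q : E₂ => (t, q₁, q)) (by fun_prop)).gradient_eq_of_hasGradientAt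
    (hasGradientAt_const_add_inner _ p₂ q₂) (hφ.comp q₂ (by fun_prop))

end Lift

section Viscosity

variable {E₁ E₂ : Type*} [NormedAddCommGroup E₁] [InnerProductSpace ℝ E₁] [CompleteSpace E₁]
  [NormedAddCommGroup E₂] [InnerProductSpace ℝ E₂] [CompleteSpace E₂]
  {I : Set ℝ} {u : ℝ × E₁ → ℝ} {p₂ : E₂} {H : E₁ → E₂ → ℝ} {φ : ℝ × E₁ × E₂ → ℝ}
  {z : ℝ × E₁ × E₂}

theorem liftAddInner_subsolution (hI : IsOpen I)
    (hsub : ∀ ψ : ℝ × E₁ → ℝ, ContDiff ℝ 1 ψ → ∀ y ∈ I ×ˢ (univ : Set E₁),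
      IsLocalMaxOn (fun y => u y - ψ y) (I ×ˢ univ) y →
      deriv (fun s => ψ (s, y.2)) y.1 + H (gradient (fun q₁ => ψ (y.1, q₁)) y.2) p₂ ≤ 0)
    (hφ : ContDiff ℝ 1 φ) (hz : z ∈ I ×ˢ (univ : Set (E₁ × E₂)))
    (hmax : IsLocalMaxOn (fun z => liftAddInner u p₂ z - φ z) (I ×ˢ univ) z) :
    deriv (fun s => φ (s, z.2)) z.1
      + H (gradient (fun q₁ => φ (z.1, q₁, z.2.2)) z.2.1)
          (gradient (fun q₂ => φ (z.1, z.2.1, q₂)) z.2.2) ≤ 0 := by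
  obtain ⟨t, q₁, q₂⟩ := z
  have hmax' := hmax.isLocalMax ((hI.prod isOpen_univ).mem_nhds hz)
  rw [IsLocalExtr.gradient_slice_eq_of_liftAddInner (hφ.differentiable one_ne_zero _) (.inr hmax')]
  exact hsub _ (by fun_prop) (t, q₁) ⟨hz.1, trivial⟩ (hmax'.sub_slice_of_liftAddInner.on _)

theorem liftAddInner_supersolution (hI : IsOpen I)
    (hsup : ∀ ψ : ℝ × E₁ → ℝ, ContDiff ℝ 1 ψ → ∀ y ∈ I ×ˢ (univ : Set E₁),
      IsLocalMinOn (fun y => u y - ψ y) (I ×ˢ univ) y →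
      deriv (fun s => ψ (s, y.2)) y.1 + H (gradient (fun q₁ => ψ (y.1, q₁)) y.2) p₂ ≥ 0)
    (hφ : ContDiff ℝ 1 φ) (hz : z ∈ I ×ˢ (univ : Set (E₁ × E₂)))
    (hmin : IsLocalMinOn (fun z => liftAddInner u p₂ z - φ z) (I ×ˢ univ) z) :
    deriv (fun s => φ (s, z.2)) z.1
      + H (gradient (fun q₁ => φ (z.1, q₁, z.2.2)) z.2.1)
          (gradient (fun q₂ => φ (z.1, z.2.1, q₂)) z.2.2) ≥ 0 := by
  obtain ⟨t, q₁, q₂⟩ := z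
  have hmin' := hmin.isLocalMin ((hI.prod isOpen_univ).mem_nhds hz)
  rw [IsLocalExtr.gradient_slice_eq_of_liftAddInner (hφ.differentiable one_ne_zero _) (.inl hmin')]
  exact hsup _ (by fun_prop) (t, q₁) ⟨hz.1, trivial⟩ (hmin'.sub_slice_of_liftAddInner.on _)

end Viscosity

theorem statement14_general (d₁ d₂ : ℕ) (H : Ed d₁ → Ed d₂ → ℝ)
    (p₂ : Ed d₂) (T : ℝ)
    (u : ℝ × Ed d₁ → ℝ)
    (hu : ContinuousOn u (Set.Ioo 0 T ×ˢ Set.univ))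
    (hsub : ∀ φ : ℝ × Ed d₁ → ℝ, ContDiff ℝ 1 φ →
      ∀ x ∈ (Set.Ioo (0:ℝ) T ×ˢ (Set.univ : Set (Ed d₁))),
        IsLocalMaxOn (fun y => u y - φ y) (Set.Ioo 0 T ×ˢ Set.univ) x →
        deriv (fun s => φ (s, x.2)) x.1
          + H (gradient (fun q₁ => φ (x.1, q₁)) x.2) p₂ ≤ 0)
    (hsup : ∀ φ : ℝ × Ed d₁ → ℝ, ContDiff ℝ 1 φ →
      ∀ x ∈ (Set.Ioo (0:ℝ) T ×ˢ (Set.univ : Set (Ed d₁))),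
        IsLocalMinOn (fun y => u y - φ y) (Set.Ioo 0 T ×ˢ Set.univ) x →
        deriv (fun s => φ (s, x.2)) x.1
          + H (gradient (fun q₁ => φ (x.1, q₁)) x.2) p₂ ≥ 0)
    (v : ℝ × Ed d₁ × Ed d₂ → ℝ)
    (hv : v = fun x => u (x.1, x.2.1) + (inner ℝ p₂ x.2.2 : ℝ)) :
    ContinuousOn v (Set.Ioo 0 T ×ˢ Set.univ) ∧
    (∀ φ : ℝ × Ed d₁ × Ed d₂ → ℝ, ContDiff ℝ 1 φ →
      ∀ x ∈ (Set.Ioo (0:ℝ) T ×ˢ (Set.univ : Set (Ed d₁ × Ed d₂))),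
        IsLocalMaxOn (fun y => v y - φ y) (Set.Ioo 0 T ×ˢ Set.univ) x →
        deriv (fun s => φ (s, x.2)) x.1
          + H (gradient (fun q₁ => φ (x.1, q₁, x.2.2)) x.2.1)
              (gradient (fun q₂ => φ (x.1, x.2.1, q₂)) x.2.2) ≤ 0) ∧
    (∀ φ : ℝ × Ed d₁ × Ed d₂ → ℝ, ContDiff ℝ 1 φ →
      ∀ x ∈ (Set.Ioo (0:ℝ) T ×ˢ (Set.univ : Set (Ed d₁ × Ed d₂))),
        IsLocalMinOn (fun y => v y - φ y) (Set.Ioo 0 T ×ˢ Set.univ) x →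
        deriv (fun s => φ (s, x.2)) x.1
          + H (gradient (fun q₁ => φ (x.1, q₁, x.2.2)) x.2.1)
              (gradient (fun q₂ => φ (x.1, x.2.1, q₂)) x.2.2) ≥ 0) := by
  obtain rfl : v = liftAddInner u p₂ := hv
  exact ⟨hu.liftAddInner, fun φ hφ x hx => liftAddInner_subsolution isOpen_Ioo hsub hφ hx,
    fun φ hφ x hx => liftAddInner_supersolution isOpen_Ioo hsup hφ hx⟩

/-- Reduction of viscosity solutions: if `u` is a viscosity solution for
the reduced Hamiltonian `H̄(p₁) = H(p₁,p₂)` on `(0,T) × ℝ^{d₁}`, then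
`v(t,q₁,q₂) = u(t,q₁) + p₂·q₂` is a viscosity solution for `H` on
`(0,T) × ℝ^{d₁} × ℝ^{d₂}`. -/
theorem statement14 (d₁ d₂ : ℕ) (H : Ed d₁ → Ed d₂ → ℝ)
    (hH : Continuous (fun p : Ed d₁ × Ed d₂ => H p.1 p.2))
    (p₂ : Ed d₂) (T : ℝ)
    (u : ℝ × Ed d₁ → ℝ)
    (hu : ContinuousOn u (Set.Ioo 0 T ×ˢ Set.univ))
    (hsub : ∀ φ : ℝ × Ed d₁ → ℝ, ContDiff ℝ 1 φ →
      ∀ x ∈ (Set.Ioo (0:ℝ) T ×ˢ (Set.univ : Set (Ed d₁))),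
        IsLocalMaxOn (fun y => u y - φ y) (Set.Ioo 0 T ×ˢ Set.univ) x →
        deriv (fun s => φ (s, x.2)) x.1
          + H (gradient (fun q₁ => φ (x.1, q₁)) x.2) p₂ ≤ 0)
    (hsup : ∀ φ : ℝ × Ed d₁ → ℝ, ContDiff ℝ 1 φ →
      ∀ x ∈ (Set.Ioo (0:ℝ) T ×ˢ (Set.univ : Set (Ed d₁))),
        IsLocalMinOn (fun y => u y - φ y) (Set.Ioo 0 T ×ˢ Set.univ) x →
        deriv (fun s => φ (s, x.2)) x.1
          + H (gradient (fun q₁ => φ (x.1, q₁)) x.2) p₂ ≥ 0)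
    (v : ℝ × Ed d₁ × Ed d₂ → ℝ)
    (hv : v = fun x => u (x.1, x.2.1) + (inner ℝ p₂ x.2.2 : ℝ)) :
    ContinuousOn v (Set.Ioo 0 T ×ˢ Set.univ) ∧
    (∀ φ : ℝ × Ed d₁ × Ed d₂ → ℝ, ContDiff ℝ 1 φ →
      ∀ x ∈ (Set.Ioo (0:ℝ) T ×ˢ (Set.univ : Set (Ed d₁ × Ed d₂))),
        IsLocalMaxOn (fun y => v y - φ y) (Set.Ioo 0 T ×ˢ Set.univ) x →
        deriv (fun s => φ (s, x.2)) x.1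
          + H (gradient (fun q₁ => φ (x.1, q₁, x.2.2)) x.2.1)
              (gradient (fun q₂ => φ (x.1, x.2.1, q₂)) x.2.2) ≤ 0) ∧
    (∀ φ : ℝ × Ed d₁ × Ed d₂ → ℝ, ContDiff ℝ 1 φ →
      ∀ x ∈ (Set.Ioo (0:ℝ) T ×ˢ (Set.univ : Set (Ed d₁ × Ed d₂))),
        IsLocalMinOn (fun y => v y - φ y) (Set.Ioo 0 T ×ˢ Set.univ) x →
        deriv (fun s => φ (s, x.2)) x.1
          + H (gradient (fun q₁ => φ (x.1, q₁, x.2.2)) x.2.1)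
              (gradient (fun q₂ => φ (x.1, x.2.1, q₂)) x.2.2) ≥ 0) :=
  statement14_general d₁ d₂ H p₂ T u hu hsub hsup v hv
end
end

section
/- Let H(p₁,p₂) = p₁p₂ on ℝ², let f : ℝ → ℝ be a compactly supported C² function with f(x) = x² for x ∈ [−1,1], let b > a > 0, and set u(q₁,q₂) = min(a(f(q₁) − q₂), b(f(q₁) − q₂)). Let R = (R^t)_{t≥0} be a variational operator for H. Then for all t ≥ 0 and all (q₁,q₂) ∈ ℝ² with −1 ≤ q₁ ≤ −(3b/2)t, one has R^t u(q₁,q₂) = min(a((q₁ + at)² − q₂), b((q₁ + bt)² − q₂)). -/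
/-!
Write `u = min v_a v_b` with `v_c q = c (f q₁ - q₂)` (`branch f c`). Wherever `u` is
differentiable its derivative is that of a branch active there (`v_c - u ≥ 0` has a minimum
where it vanishes), so every element of the Clarke derivative of `u` at `q₀` is `(c f'(q₀₁), -c)`
with `c ∈ [a, b]` and `u q₀ = v_c q₀`. Along such a characteristic `q₀₁ = q₁ + c t ∈ [-1, 1]`,
where `f x = x²`, so the variational property gives `R^t u q = c ((q₁ + c t)² - q₂)`. In the
region this is concave in `c`, hence at least the minimum of its values at `a` and `b`;
conversely, the same computation for a single branch and monotonicity of `R^t` bound `R^t u q`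
by each of these two values.
-/

open Filter Topology Set

noncomputable section

/-- The Clarke derivative (in coordinates) of a Lipschitz function `u : ℝ² → ℝ` at `q`. -/
def clarke2 (u : ℝ × ℝ → ℝ) (q : ℝ × ℝ) : Set (ℝ × ℝ) :=
  convexHull ℝ {p | ∃ qn : ℕ → ℝ × ℝ,
    (∀ n, DifferentiableAt ℝ u (qn n)) ∧
    Tendsto qn atTop (𝓝 q) ∧
    Tendsto (fun n => (fderiv ℝ u (qn n) (1, 0), fderiv ℝ u (qn n) (0, 1))) atTop (𝓝 p)}

/-- A variational operator for the saddle Hamiltonian `H(p₁,p₂) = p₁p₂`, for which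
`∇H(p₁,p₂) = (p₂,p₁)` and `p·∇H(p) − H(p) = p₁p₂`. -/
def IsVariationalOperatorSaddle (R : ℝ → (ℝ × ℝ → ℝ) → (ℝ × ℝ → ℝ)) : Prop :=
  (∀ t : ℝ, 0 ≤ t → ∀ u : ℝ × ℝ → ℝ, (∃ K, LipschitzWith K u) →
      ∃ K, LipschitzWith K (R t u)) ∧
  (∀ t : ℝ, 0 ≤ t → ∀ u v : ℝ × ℝ → ℝ, (∃ K, LipschitzWith K u) →
      (∃ K, LipschitzWith K v) → (∀ q, u q ≤ v q) → ∀ q, R t u q ≤ R t v q) ∧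
  (∀ t : ℝ, 0 ≤ t → ∀ u : ℝ × ℝ → ℝ, (∃ K, LipschitzWith K u) → ∀ c : ℝ, ∀ q,
      R t (fun x => c + u x) q = c + R t u q) ∧
  (∀ t : ℝ, 0 ≤ t → ∀ u : ℝ × ℝ → ℝ, (∃ K, LipschitzWith K u) → ∀ q : ℝ × ℝ,
      ∃ q₀ p₀ : ℝ × ℝ, p₀ ∈ clarke2 u q₀ ∧
        q = (q₀.1 + t * p₀.2, q₀.2 + t * p₀.1) ∧
        R t u q = u q₀ + t * p₀.1 * p₀.2)

def coordGrad (u : ℝ × ℝ → ℝ) (x : ℝ × ℝ) : ℝ × ℝ := (fderiv ℝ u x (1, 0), fderiv ℝ u x (0, 1))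

theorem ContDiff.continuous_coordGrad {k : ℝ × ℝ → ℝ} (hk : ContDiff ℝ 1 k) :
    Continuous (coordGrad k) := by
  have := hk.continuous_fderiv one_ne_zero
  unfold coordGrad
  fun_prop

theorem fderiv_eq_of_le_of_eq {E : Type*} [NormedAddCommGroup E] [NormedSpace ℝ E]
    {u g : E → ℝ} {x : E} (hu : DifferentiableAt ℝ u x) (hg : DifferentiableAt ℝ g x)
    (hle : ∀ y, u y ≤ g y) (heq : u x = g x) : fderiv ℝ u x = fderiv ℝ g x := by
  have hmin : IsLocalMin (fun y => g y - u y) x :=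
    Eventually.of_forall fun y => by simpa [heq] using hle y
  have := hmin.fderiv_eq_zero
  rw [fderiv_fun_sub hg hu, sub_eq_zero] at this
  exact this.symm

theorem fderiv_min_eq {E : Type*} [NormedAddCommGroup E] [NormedSpace ℝ E] {g h : E → ℝ} {x : E}
    (hu : DifferentiableAt ℝ (fun y => min (g y) (h y)) x) (hg : DifferentiableAt ℝ g x)
    (hh : DifferentiableAt ℝ h x) :
    (min (g x) (h x) = g x ∧ fderiv ℝ (fun y => min (g y) (h y)) x = fderiv ℝ g x) ∨
      (min (g x) (h x) = h x ∧ fderiv ℝ (fun y => min (g y) (h y)) x = fderiv ℝ h x) := by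
  rcases min_choice (g x) (h x) with hx | hx
  · exact Or.inl ⟨hx, fderiv_eq_of_le_of_eq hu hg (fun y => min_le_left _ _) hx⟩
  · exact Or.inr ⟨hx, fderiv_eq_of_le_of_eq hu hh (fun y => min_le_right _ _) hx⟩

theorem eq_coordGrad_of_frequently {u k : ℝ × ℝ → ℝ} (hu : Continuous u) (hk : ContDiff ℝ 1 k)
    {qn : ℕ → ℝ × ℝ} {q p : ℝ × ℝ} (hq : Tendsto qn atTop (𝓝 q))
    (hp : Tendsto (fun n => coordGrad u (qn n)) atTop (𝓝 p))
    (hfreq : ∃ᶠ n in atTop, u (qn n) = k (qn n) ∧ fderiv ℝ u (qn n) = fderiv ℝ k (qn n)) :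
    u q = k q ∧ p = coordGrad k q :=
  ⟨tendsto_nhds_unique_of_frequently_eq ((hu.tendsto q).comp hq)
      ((hk.continuous.tendsto q).comp hq) (hfreq.mono fun _ h => h.1),
    tendsto_nhds_unique_of_frequently_eq hp ((hk.continuous_coordGrad.tendsto q).comp hq)
      (hfreq.mono fun _ h => by simp only [Function.comp_apply, coordGrad, h.2])⟩

theorem clarke2_subset_of_contDiff {k : ℝ × ℝ → ℝ} (hk : ContDiff ℝ 1 k) (q : ℝ × ℝ) :
    clarke2 k q ⊆ {coordGrad k q} := by
  rw [← convexHull_singleton (𝕜 := ℝ) (coordGrad k q)]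
  refine convexHull_mono ?_
  rintro p ⟨qn, -, hq, hp⟩
  exact (eq_coordGrad_of_frequently hk.continuous hk hq hp
    (Frequently.of_forall fun _ => ⟨rfl, rfl⟩)).2

theorem clarke2_min_subset {g h : ℝ × ℝ → ℝ} (hg : ContDiff ℝ 1 g) (hh : ContDiff ℝ 1 h)
    (q : ℝ × ℝ) :
    clarke2 (fun y => min (g y) (h y)) q ⊆ convexHull ℝ
      {p | (min (g q) (h q) = g q ∧ p = coordGrad g q) ∨
        (min (g q) (h q) = h q ∧ p = coordGrad h q)} := by
  refine convexHull_mono ?_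
  rintro p ⟨qn, hdiff, hq, hp⟩
  have hcont : Continuous fun y => min (g y) (h y) := hg.continuous.min hh.continuous
  have hactive := fun n => fderiv_min_eq (hdiff n) (hg.differentiable one_ne_zero _)
    (hh.differentiable one_ne_zero _)
  rcases frequently_or_distrib.1 (Frequently.of_forall (f := atTop) hactive) with hfr | hfr
  · exact Or.inl (eq_coordGrad_of_frequently hcont hg hq hp hfr)
  · exact Or.inr (eq_coordGrad_of_frequently hcont hh hq hp hfr)

def branch (f : ℝ → ℝ) (c : ℝ) (q : ℝ × ℝ) : ℝ := c * (f q.1 - q.2)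

section Branch

variable {f : ℝ → ℝ}

theorem contDiff_branch (hf : ContDiff ℝ 1 f) (c : ℝ) : ContDiff ℝ 1 (branch f c) := by
  unfold branch
  fun_prop

theorem coordGrad_branch (hf : Differentiable ℝ f) (c : ℝ) (x : ℝ × ℝ) :
    coordGrad (branch f c) x = (c * deriv f x.1, -c) := by
  have hd : HasFDerivAt (branch f c)
      (c • (deriv f x.1 • ContinuousLinearMap.fst ℝ ℝ ℝ - ContinuousLinearMap.snd ℝ ℝ ℝ)) x :=
    (((hf x.1).hasDerivAt.comp_hasFDerivAt x hasFDerivAt_fst).sub hasFDerivAt_snd).const_mul c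
  simp [coordGrad, hd.fderiv]

theorem lipschitzWith_branch {K : NNReal} (hf : LipschitzWith K f) (c : ℝ) :
    ∃ K, LipschitzWith K (branch f c) :=
  ⟨_, (lipschitzWith_smul c).comp ((hf.comp LipschitzWith.prod_fst).sub LipschitzWith.prod_snd)⟩

theorem clarke2_branch (hf : ContDiff ℝ 1 f) {c : ℝ} {q p : ℝ × ℝ}
    (hp : p ∈ clarke2 (branch f c) q) : p = (c * deriv f q.1, -c) := by
  rw [← coordGrad_branch (hf.differentiable one_ne_zero)]
  exact clarke2_subset_of_contDiff (contDiff_branch hf c) q hp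

theorem clarke2_min_branch (hf : ContDiff ℝ 1 f) {a b : ℝ} (hab : a ≤ b) {q p : ℝ × ℝ}
    (hp : p ∈ clarke2 (fun x => min (branch f a x) (branch f b x)) q) :
    ∃ c ∈ Icc a b, p = (c * deriv f q.1, -c) ∧
      min (branch f a q) (branch f b q) = branch f c q := by
  set m := min (branch f a q) (branch f b q)
  set T : Set (ℝ × ℝ) := {p | ∃ c ∈ Icc a b, p = (c * deriv f q.1, -c) ∧ m = branch f c q}
  have hT : Convex ℝ T := by
    rintro _ ⟨c₁, hc₁, rfl, hm₁⟩ _ ⟨c₂, hc₂, rfl, hm₂⟩ s r hs hr hsr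
    refine ⟨s * c₁ + r * c₂, convex_Icc a b hc₁ hc₂ hs hr hsr, ?_, ?_⟩
    · simp only [Prod.smul_mk, Prod.mk_add_mk, smul_eq_mul]
      ext <;> ring
    · simp only [branch] at hm₁ hm₂ ⊢
      linear_combination s * hm₁ + r * hm₂ - m * hsr
  have hgen : {p | (m = branch f a q ∧ p = coordGrad (branch f a) q) ∨
      (m = branch f b q ∧ p = coordGrad (branch f b) q)} ⊆ T := by
    rintro p (⟨hm, rfl⟩ | ⟨hm, rfl⟩)
    · exact ⟨a, ⟨le_rfl, hab⟩, coordGrad_branch (hf.differentiable one_ne_zero) a q, hm⟩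
    · exact ⟨b, ⟨hab, le_rfl⟩, coordGrad_branch (hf.differentiable one_ne_zero) b q, hm⟩
  exact convexHull_min hgen hT
    (clarke2_min_subset (contDiff_branch hf a) (contDiff_branch hf b) q hp)

end Branch

theorem deriv_eq_two_mul_of_eqOn_Icc {f : ℝ → ℝ} (hf : Differentiable ℝ f)
    (hfx : ∀ x ∈ Icc (-1:ℝ) 1, f x = x ^ 2) {x : ℝ} (hx : x ∈ Icc (-1:ℝ) 1) :
    deriv f x = 2 * x := by
  have hud : UniqueDiffWithinAt ℝ (Icc (-1:ℝ) 1) x := uniqueDiffOn_Icc (by norm_num) x hx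
  have hsq : HasDerivWithinAt f (2 * x) (Icc (-1:ℝ) 1) x := by
    have := (hasDerivAt_pow 2 x).hasDerivWithinAt (s := Icc (-1:ℝ) 1)
    exact (by simpa using this : HasDerivWithinAt (· ^ 2) (2 * x) _ x).congr hfx (hfx x hx)
  rw [← (hf x).hasDerivAt.hasDerivWithinAt.derivWithin hud, hsq.derivWithin hud]

/-- The value at time `t` of the classical solution with initial datum `c (q₁² - q₂)`. -/
def branchSolution (c t : ℝ) (q : ℝ × ℝ) : ℝ := c * ((q.1 + c * t) ^ 2 - q.2)

theorem exists_eq_branchSolution {R : ℝ → (ℝ × ℝ → ℝ) → (ℝ × ℝ → ℝ)}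
    (hR : IsVariationalOperatorSaddle R) {f : ℝ → ℝ} (hf : Differentiable ℝ f)
    (hfx : ∀ x ∈ Icc (-1:ℝ) 1, f x = x ^ 2) {w : ℝ × ℝ → ℝ} (hw : ∃ K, LipschitzWith K w)
    {s : Set ℝ} {b : ℝ} (hs : s ⊆ Icc 0 b)
    (hslopes : ∀ q₀, ∀ p ∈ clarke2 w q₀,
      ∃ c ∈ s, p = (c * deriv f q₀.1, -c) ∧ w q₀ = branch f c q₀)
    {t : ℝ} (ht : 0 ≤ t) {q : ℝ × ℝ} (hq₁ : -1 ≤ q.1) (hq₂ : q.1 ≤ -(3 * b / 2) * t) :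
    ∃ c ∈ s, R t w q = branchSolution c t q := by
  obtain ⟨q₀, p, hp, rfl, hRq⟩ := hR.2.2.2 t ht w hw q
  obtain ⟨c, hcs, rfl, hw₀⟩ := hslopes q₀ p hp
  obtain ⟨hc, hcb⟩ := hs hcs
  have hx : q₀.1 ∈ Icc (-1:ℝ) 1 := by
    dsimp only at hq₁ hq₂
    constructor <;> nlinarith
  refine ⟨c, hcs, ?_⟩
  rw [hRq, hw₀, branchSolution, branch, hfx _ hx, deriv_eq_two_mul_of_eqOn_Icc hf hfx hx]
  ring

/-- `c ↦ branchSolution c t q` is a cubic with second derivative `2t (2q₁ + 3ct) ≤ 0` for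
`c ≤ b`, hence concave on `[a, b]`. -/
theorem min_branchSolution_le {a b c t : ℝ} {q : ℝ × ℝ} (hac : a ≤ c) (hcb : c ≤ b)
    (ht : 0 ≤ t) (hq : q.1 ≤ -(3 * b / 2) * t) :
    min (branchSolution a t q) (branchSolution b t q) ≤ branchSolution c t q := by
  rcases hac.eq_or_lt with rfl | hac
  · exact min_le_left _ _
  have hconc : (b - c) * branchSolution a t q + (c - a) * branchSolution b t q ≤
      (b - a) * branchSolution c t q := by
    have hlin : 0 ≤ -2 * q.1 - t * (a + b + c) := by nlinarith
    have : 0 ≤ (b - c) * (c - a) * (b - a) * t * (-2 * q.1 - t * (a + b + c)) :=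
      mul_nonneg (mul_nonneg (mul_nonneg (mul_nonneg (sub_nonneg.2 hcb) (sub_nonneg.2 hac.le))
        (sub_nonneg.2 (hac.trans_le hcb).le)) ht) hlin
    unfold branchSolution
    linear_combination this
  nlinarith [min_le_left (branchSolution a t q) (branchSolution b t q),
    min_le_right (branchSolution a t q) (branchSolution b t q)]

/-- Explicit value of the variational solution for the saddle Hamiltonian
`H(p₁,p₂) = p₁p₂` and the initial condition
`u(q₁,q₂) = min(a(f(q₁) − q₂), b(f(q₁) − q₂))` in the region `−1 ≤ q₁ ≤ −(3b/2)t`. -/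
theorem statement15 (f : ℝ → ℝ) (hf : ContDiff ℝ 2 f) (hsupp : HasCompactSupport f)
    (hfx : ∀ x ∈ Set.Icc (-1:ℝ) 1, f x = x ^ 2)
    (a b : ℝ) (ha : 0 < a) (hab : a < b)
    (u : ℝ × ℝ → ℝ)
    (hu : u = fun q => min (a * (f q.1 - q.2)) (b * (f q.1 - q.2)))
    (R : ℝ → (ℝ × ℝ → ℝ) → (ℝ × ℝ → ℝ))
    (hR : IsVariationalOperatorSaddle R) :
    ∀ t : ℝ, 0 ≤ t → ∀ q : ℝ × ℝ, -1 ≤ q.1 → q.1 ≤ -(3 * b / 2) * t →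
      R t u q = min (a * ((q.1 + a * t) ^ 2 - q.2)) (b * ((q.1 + b * t) ^ 2 - q.2)) := by
  intro t ht q hq₁ hq₂
  subst hu
  have hf₁ : ContDiff ℝ 1 f := hf.of_le one_le_two
  obtain ⟨K, hK⟩ := hf₁.lipschitzWith_of_hasCompactSupport hsupp one_ne_zero
  have hlip := lipschitzWith_branch hK
  have hlipu : ∃ K, LipschitzWith K fun x => min (branch f a x) (branch f b x) := by
    obtain ⟨Ka, hKa⟩ := hlip a
    obtain ⟨Kb, hKb⟩ := hlip b
    exact ⟨max Ka Kb, hKa.min hKb⟩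
  have hupper : ∀ c ∈ Icc 0 b, (∀ x, min (branch f a x) (branch f b x) ≤ branch f c x) →
      R t (fun x => min (branch f a x) (branch f b x)) q ≤ branchSolution c t q := by
    intro c hc hle
    obtain ⟨c', hc', hRc⟩ := exists_eq_branchSolution hR (hf₁.differentiable one_ne_zero) hfx
      (hlip c) (singleton_subset_iff.2 hc) (fun _ _ hp => ⟨c, rfl, clarke2_branch hf₁ hp, rfl⟩)
      ht hq₁ hq₂
    rw [mem_singleton_iff.1 hc'] at hRc
    exact hRc ▸ hR.2.1 t ht _ _ hlipu (hlip c) hle q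
  obtain ⟨c, hc, hRc⟩ := exists_eq_branchSolution hR (hf₁.differentiable one_ne_zero) hfx hlipu
    (Icc_subset_Icc ha.le le_rfl) (fun _ _ hp => clarke2_min_branch hf₁ hab.le hp) ht hq₁ hq₂
  refine le_antisymm (le_min ?_ ?_) (hRc ▸ min_branchSolution_le hc.1 hc.2 ht hq₂)
  · exact hupper a ⟨ha.le, hab.le⟩ fun x => min_le_left _ _
  · exact hupper b ⟨ha.le.trans hab.le, le_rfl⟩ fun x => min_le_right _ _
end
end
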